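/- arXiv:1401.7156 — 14 statements merged into one kernel-verified Lean document; each statement's English description precedes it below -/
import Mathlib

section
/- Let $p \geq 1$. Then for every non-negative summable sequence $(a_k)_{k\geq 1}$ and every integer $n \geq 1$, one has $\left(\sum_{k=n}^{\infty} a_k\right)^p \leq p \sum_{k=n}^{\infty} a_k \left(\sum_{i=k}^{\infty} a_i\right)^{p-1}$. -/
lemma aux_rpow_sub_rpow_le (p : ℝ) (hp : 1 ≤ p) {x y : ℝ} (hy : 0 ≤ y) (hxy : y ≤ x) :
    x ^ p - y ^ p ≤ p * (x - y) * x ^ (p - 1) := by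
  have hx : 0 ≤ x := hy.trans hxy
  rcases eq_or_lt_of_le hx with h | hx0
  · have hy0 : y = 0 := le_antisymm (hxy.trans h.symm.le) hy
    subst hy0
    rw [← h, Real.zero_rpow (by positivity : p ≠ 0)]
    simp
  · have hs : (-1:ℝ) ≤ y / x - 1 := by
      have : 0 ≤ y / x := div_nonneg hy hx
      linarith
    have key := one_add_mul_self_le_rpow_one_add hs hp
    rw [add_sub_cancel] at key
    have hdiv : (y / x) ^ p = y ^ p / x ^ p := Real.div_rpow hy hx p
    rw [hdiv] at key
    have hxp : (0:ℝ) < x ^ p := Real.rpow_pos_of_pos hx0 p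
    have key2 : (1 + p * (y / x - 1)) * x ^ p ≤ y ^ p := (le_div_iff₀ hxp).1 key
    have h3 : (1 + p * (y / x - 1)) * x ^ p = x ^ p + p * (y - x) * (x ^ p / x) := by
      field_simp
    rw [Real.rpow_sub_one hx0.ne' p]
    linarith [key2, h3 ▸ key2]

/-- Power Rule of Bennett and Grosse-Erdmann: for `p ≥ 1` and a non-negative
summable sequence `a` (indexed from 1), for every `n ≥ 1`,
`(∑_{k=n}^∞ a k)^p ≤ p * ∑_{k=n}^∞ a k * (∑_{i=k}^∞ a i)^(p-1)`. -/
theorem power_rule (p : ℝ) (hp : 1 ≤ p) (a : ℕ → ℝ) (ha : ∀ k, 0 ≤ a k)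
    (hsum : Summable a) (n : ℕ) (hn : 1 ≤ n) :
    (∑' k : ℕ, a (n + k)) ^ p ≤
      p * ∑' k : ℕ, a (n + k) * (∑' i : ℕ, a (n + k + i)) ^ (p - 1) := by
  set r : ℕ → ℝ := fun m => ∑' i, a (m + i) with hrdef
  have hrsum : ∀ m, Summable (fun i => a (m + i)) := by
    intro m
    exact ((summable_nat_add_iff m).2 hsum).congr fun i => by rw [add_comm]
  have hrnn : ∀ m, 0 ≤ r m := fun m => tsum_nonneg fun i => ha _
  have hrec : ∀ m, r m = a m + r (m + 1) := by
    intro m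
    have h := Summable.tsum_eq_zero_add (hrsum m)
    have h2 : (∑' i, a (m + (i + 1))) = ∑' i, a ((m + 1) + i) :=
      tsum_congr fun i => by rw [show m + (i + 1) = (m + 1) + i from by ring]
    rw [h2] at h
    simpa using h
  have hanti : Antitone r := by
    apply antitone_nat_of_succ_le
    intro m
    have := hrec m
    have := ha m
    linarith
  have hr0 : Filter.Tendsto r Filter.atTop (nhds 0) := by
    have := tendsto_sum_nat_add a
    exact this.congr fun m => tsum_congr fun i => by rw [add_comm]
  -- g k := a (n+k) * r (n+k) ^ (p-1)
  set g : ℕ → ℝ := fun k => a (n + k) * r (n + k) ^ (p - 1) with hgdef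
  have hgnn : ∀ k, 0 ≤ g k := fun k =>
    mul_nonneg (ha _) (Real.rpow_nonneg (hrnn _) _)
  have hgsum : Summable g := by
    have hle : ∀ k, g k ≤ a (n + k) * r n ^ (p - 1) := by
      intro k
      apply mul_le_mul_of_nonneg_left _ (ha _)
      exact Real.rpow_le_rpow (hrnn _) (hanti (Nat.le_add_right n k)) (by linarith)
    exact Summable.of_nonneg_of_le hgnn hle ((hrsum n).mul_right _)
  -- key per-term inequality
  have hkey : ∀ k, r (n + k) ^ p - r (n + k + 1) ^ p ≤ p * g k := by
    intro k
    have h1 : r (n + k) - r (n + k + 1) = a (n + k) := by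
      have := hrec (n + k); linarith
    have h2 := aux_rpow_sub_rpow_le p hp (hrnn (n + k + 1))
      (hanti (Nat.le_succ (n + k)))
    calc r (n + k) ^ p - r (n + k + 1) ^ p
        ≤ p * (r (n + k) - r (n + k + 1)) * r (n + k) ^ (p - 1) := h2
      _ = p * g k := by rw [h1, hgdef]; ring
  -- partial sums
  have hpart : ∀ N, r n ^ p - r (n + N) ^ p ≤ p * ∑' k, g k := by
    intro N
    have h1 : ∑ k ∈ Finset.range N, (r (n + k) ^ p - r (n + (k + 1)) ^ p)
        = r (n + 0) ^ p - r (n + N) ^ p := Finset.sum_range_sub' (fun k => r (n + k) ^ p) N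
    have h2 : ∑ k ∈ Finset.range N, (r (n + k) ^ p - r (n + (k + 1)) ^ p)
        ≤ ∑ k ∈ Finset.range N, p * g k := by
      apply Finset.sum_le_sum
      intro k _
      simpa [← add_assoc] using hkey k
    have h3 : ∑ k ∈ Finset.range N, p * g k ≤ p * ∑' k, g k := by
      rw [← Finset.mul_sum]
      apply mul_le_mul_of_nonneg_left _ (by linarith : (0:ℝ) ≤ p)
      exact Summable.sum_le_tsum _ (fun k _ => hgnn k) hgsum
    rw [h1] at h2
    simpa using h2.trans h3
  -- limit
  have htail : Filter.Tendsto (fun N => r (n + N) ^ p) Filter.atTop (nhds 0) := by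
    have h1 : Filter.Tendsto (fun N => r (n + N)) Filter.atTop (nhds 0) :=
      hr0.comp (Filter.tendsto_atTop_mono (fun N => Nat.le_add_left N n) Filter.tendsto_id)
    have h2 : Filter.Tendsto (fun x : ℝ => x ^ p) (nhds 0) (nhds ((0:ℝ) ^ p)) := by
      apply ContinuousAt.tendsto
      exact Real.continuousAt_rpow_const 0 p (Or.inr (by linarith))
    rw [Real.zero_rpow (by positivity : p ≠ 0)] at h2
    exact h2.comp h1
  have final : r n ^ p ≤ p * ∑' k, g k := by
    have : Filter.Tendsto (fun N => r (n + N) ^ p + p * ∑' k, g k) Filter.atTop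
        (nhds (0 + p * ∑' k, g k)) := htail.add tendsto_const_nhds
    rw [zero_add] at this
    apply ge_of_tendsto this
    filter_upwards with N
    have := hpart N
    linarith
  simp only [hgdef, hrdef] at final
  exact final
end

section
/- Let $(B_n)_{n\geq 1}$ and $(C_n)_{n\geq 1}$ be strictly increasing positive sequences with $B_1/B_2 \leq C_1/C_2$. If for every integer $n \geq 1$ one has $(B_{n+1}-B_n)/(B_{n+2}-B_{n+1}) \leq (C_{n+1}-C_n)/(C_{n+2}-C_{n+1})$, then $B_n/B_{n+1} \leq C_n/C_{n+1}$ for every $n \geq 1$. -/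
/-- If `B`, `C` are strictly increasing positive sequences with
`B 1 / B 2 ≤ C 1 / C 2` and the ratios of successive differences of `B` are
dominated by those of `C`, then `B n / B (n+1) ≤ C n / C (n+1)` for all `n ≥ 1`. -/
theorem ratio_comparison (B C : ℕ → ℝ)
    (hBpos : ∀ n, 1 ≤ n → 0 < B n) (hCpos : ∀ n, 1 ≤ n → 0 < C n)
    (hBmono : ∀ n, 1 ≤ n → B n < B (n + 1)) (hCmono : ∀ n, 1 ≤ n → C n < C (n + 1))
    (h12 : B 1 / B 2 ≤ C 1 / C 2)
    (hdiff : ∀ n, 1 ≤ n →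
      (B (n + 1) - B n) / (B (n + 2) - B (n + 1)) ≤
        (C (n + 1) - C n) / (C (n + 2) - C (n + 1))) :
    ∀ n, 1 ≤ n → B n / B (n + 1) ≤ C n / C (n + 1) := by
  have key : ∀ n, 1 ≤ n → B n * (C (n + 1) - C n) ≤ C n * (B (n + 1) - B n) := by
    intro n hn
    induction n, hn using Nat.le_induction with
    | base =>
      have hB2 := hBpos 2 (by norm_num)
      have hC2 := hCpos 2 (by norm_num)
      have h := (div_le_div_iff₀ hB2 hC2).mp h12
      nlinarith
    | succ n hn ih =>
      have hdB := sub_pos.mpr (hBmono n hn)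
      have hdB' := sub_pos.mpr (hBmono (n + 1) (by omega))
      have hdC := sub_pos.mpr (hCmono n hn)
      have hdC' := sub_pos.mpr (hCmono (n + 1) (by omega))
      have h := (div_le_div_iff₀ hdB' hdC').mp (hdiff n hn)
      have hBn := hBpos n hn
      have hCn := hCpos n hn
      nlinarith [mul_pos hdB hdC, mul_le_mul ih h (by positivity)
        (by positivity : (0:ℝ) ≤ C n * (B (n + 1) - B n))]
  intro n hn
  have hB' := hBpos (n + 1) (by omega)
  have hC' := hCpos (n + 1) (by omega)
  rw [div_le_div_iff₀ hB' hC']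
  nlinarith [key n hn]
end

section
/- For every real $p$ with $1 < p \leq 2$, the function $g(t) = t - (1+t)^{1-p} + (1-t)^p$ is non-negative for all $t \in [0, 1/2]$. -/
/-!
Since `g 0 = g' 0 = 0`, it suffices that `g'' ≥ 0` on `[0, 1)`: then `g'` and hence `g` are
nondecreasing there. This holds for `1 ≤ p ≤ 2` because `(1 - t)^(p-2) ≥ 1 ≥ (1 + t)^(-p-1)`
for `0 ≤ t < 1`.
-/

open Set

theorem monotoneOn_of_hasDerivAt_nonneg {D : Set ℝ} (hD : Convex ℝ D) {f f' : ℝ → ℝ}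
    (hf : ∀ x ∈ D, HasDerivAt f (f' x) x) (hf' : ∀ x ∈ interior D, 0 ≤ f' x) :
    MonotoneOn f D :=
  monotoneOn_of_hasDerivWithinAt_nonneg hD
    (fun x hx => (hf x hx).continuousAt.continuousWithinAt)
    (fun x hx => (hf x (interior_subset hx)).hasDerivWithinAt) hf'

noncomputable section

variable (p : ℝ)

def g (t : ℝ) : ℝ := t - (1 + t) ^ (1 - p) + (1 - t) ^ p

def g' (t : ℝ) : ℝ := 1 + (p - 1) * (1 + t) ^ (-p) - p * (1 - t) ^ (p - 1)

def g'' (t : ℝ) : ℝ := p * (p - 1) * ((1 - t) ^ (p - 2) - (1 + t) ^ (-p - 1))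

variable {p}

theorem hasDerivAt_g {t : ℝ} (ht : t ∈ Ioo (-1) 1) : HasDerivAt (g p) (g' p t) t := by
  have hplus :=
    ((hasDerivAt_id' t).const_add 1).rpow_const (p := 1 - p) (.inl (by linarith [ht.1]))
  have hminus :=
    ((hasDerivAt_id' t).const_sub 1).rpow_const (p := p) (.inl (by linarith [ht.2]))
  refine (((hasDerivAt_id' t).sub hplus).add hminus).congr_deriv ?_
  rw [g', show 1 - p - 1 = -p by ring]
  ring

theorem hasDerivAt_g' {t : ℝ} (ht : t ∈ Ioo (-1) 1) : HasDerivAt (g' p) (g'' p t) t := by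
  have hplus :=
    ((hasDerivAt_id' t).const_add 1).rpow_const (p := -p) (.inl (by linarith [ht.1]))
  have hminus :=
    ((hasDerivAt_id' t).const_sub 1).rpow_const (p := p - 1) (.inl (by linarith [ht.2]))
  refine (((hasDerivAt_const t 1).add (hplus.const_mul (p - 1))).sub
    (hminus.const_mul p)).congr_deriv ?_
  rw [g'', show p - 1 - 1 = p - 2 by ring]
  ring

theorem g''_nonneg (hp1 : 1 ≤ p) (hp2 : p ≤ 2) {t : ℝ} (ht : t ∈ Ico 0 1) : 0 ≤ g'' p t := by
  have hminus : 1 ≤ (1 - t) ^ (p - 2) :=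
    Real.one_le_rpow_of_pos_of_le_one_of_nonpos (by linarith [ht.2]) (by linarith [ht.1])
      (by linarith)
  have hplus : (1 + t) ^ (-p - 1) ≤ 1 :=
    Real.rpow_le_one_of_one_le_of_nonpos (by linarith [ht.1]) (by linarith)
  exact mul_nonneg (mul_nonneg (by linarith) (by linarith)) (by linarith)

theorem g'_nonneg (hp1 : 1 ≤ p) (hp2 : p ≤ 2) {t : ℝ} (ht : t ∈ Ico 0 1) : 0 ≤ g' p t := by
  have hmono : MonotoneOn (g' p) (Ico 0 1) :=
    monotoneOn_of_hasDerivAt_nonneg (convex_Ico 0 1)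
      (fun x hx => hasDerivAt_g' ⟨by linarith [hx.1], hx.2⟩)
      (fun x hx => g''_nonneg hp1 hp2 (Ioo_subset_Ico_self (by rwa [interior_Ico] at hx)))
  simpa [g'] using hmono ⟨le_rfl, one_pos⟩ ht ht.1

theorem g_nonneg_of_mem_Ico (hp1 : 1 ≤ p) (hp2 : p ≤ 2) {t : ℝ} (ht : t ∈ Ico 0 1) :
    0 ≤ g p t := by
  have hmono : MonotoneOn (g p) (Ico 0 1) :=
    monotoneOn_of_hasDerivAt_nonneg (convex_Ico 0 1)
      (fun x hx => hasDerivAt_g ⟨by linarith [hx.1], hx.2⟩)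
      (fun x hx => g'_nonneg hp1 hp2 (Ioo_subset_Ico_self (by rwa [interior_Ico] at hx)))
  simpa [g] using hmono ⟨le_rfl, one_pos⟩ ht ht.1

end

/-- For `1 < p ≤ 2`, the function `g(t) = t - (1+t)^(1-p) + (1-t)^p` is
non-negative on `[0, 1/2]`. -/
theorem g_nonneg (p : ℝ) (hp1 : 1 < p) (hp2 : p ≤ 2) (t : ℝ)
    (ht : t ∈ Set.Icc (0 : ℝ) (1 / 2)) :
    0 ≤ t - (1 + t) ^ (1 - p) + (1 - t) ^ p :=
  g_nonneg_of_mem_Ico hp1.le hp2 ⟨ht.1, by linarith [ht.2]⟩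
end

section
/- For every real $p$ with $1 < p \leq 2$ and every real $z \geq 0$, one has $z - (1+z)^p (1+2z)^{1-p} + (1+z)^{1-p} \geq 0$. -/
/-!
With `x = z / (1 + z) ∈ [0, 1)` the expression equals
`(1 + z) * (x + (1 - x) ^ p - (1 + x) ^ (1 - p))`. The function
`g y = y + (1 - y) ^ p - (1 + y) ^ (1 - p)` vanishes at `0`, and the two Bernoulli inequalities
`(1 - y) ^ (p - 1) ≤ 1 - (p - 1) y` and `(1 + y) ^ (-p) ≥ 1 - p y` bound its derivative
`1 - p (1 - y) ^ (p - 1) + (p - 1) (1 + y) ^ (-p)` from below by exactly `0`, so `g` is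
nondecreasing and `g x ≥ 0`.
-/

open Real Set

theorem one_add_mul_self_le_rpow_one_add_of_le_neg_one {s : ℝ} (hs : -1 < s) {p : ℝ}
    (hp : p ≤ -1) : 1 + p * s ≤ (1 + s) ^ p := by
  have hs₀ : 0 < 1 + s := by linarith
  rcases le_or_gt s 1 with hs₁ | hs₁
  · have hinv : 1 - s ≤ (1 + s)⁻¹ := by
      rw [← one_div, le_div_iff₀ hs₀]
      nlinarith [sq_nonneg s]
    calc 1 + p * s = 1 + -p * -s := by ring
      _ ≤ (1 + -s) ^ (-p) := one_add_mul_self_le_rpow_one_add (by linarith) (by linarith)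
      _ ≤ (1 + s)⁻¹ ^ (-p) := rpow_le_rpow (by linarith) (by linarith) (by linarith)
      _ = (1 + s) ^ p := by rw [inv_rpow hs₀.le, rpow_neg hs₀.le, inv_inv]
  · exact (by nlinarith : 1 + p * s ≤ 0).trans (rpow_pos_of_pos hs₀ p).le

theorem hasDerivAt_self_add_one_sub_rpow_sub_one_add_rpow (p : ℝ) {y : ℝ} (hy : y ∈ Ioo (-1) 1) :
    HasDerivAt (fun y ↦ y + (1 - y) ^ p - (1 + y) ^ (1 - p))
      (1 - p * (1 - y) ^ (p - 1) + (p - 1) * (1 + y) ^ (-p)) y := by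
  have hneg : HasDerivAt (fun y : ℝ ↦ (1 - y) ^ p) (-1 * p * (1 - y) ^ (p - 1)) y :=
    ((hasDerivAt_id y).const_sub 1).rpow_const (Or.inl (by simp only [id]; linarith [hy.2]))
  have hpos : HasDerivAt (fun y : ℝ ↦ (1 + y) ^ (1 - p)) (1 * (1 - p) * (1 + y) ^ (1 - p - 1)) y :=
    ((hasDerivAt_id y).const_add 1).rpow_const (Or.inl (by simp only [id]; linarith [hy.1]))
  refine ((hasDerivAt_id y).add hneg).sub hpos |>.congr_deriv ?_
  rw [show 1 - p - 1 = -p by ring]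
  ring

theorem deriv_self_add_one_sub_rpow_sub_one_add_rpow_nonneg {p : ℝ} (hp₁ : 1 ≤ p) (hp₂ : p ≤ 2)
    {y : ℝ} (hy : y ∈ Ioo (-1) 1) :
    0 ≤ 1 - p * (1 - y) ^ (p - 1) + (p - 1) * (1 + y) ^ (-p) := by
  have hle : (1 + -y) ^ (p - 1) ≤ 1 + (p - 1) * -y :=
    rpow_one_add_le_one_add_mul_self (by linarith [hy.2]) (by linarith) (by linarith)
  have hge : 1 + -p * y ≤ (1 + y) ^ (-p) :=
    one_add_mul_self_le_rpow_one_add_of_le_neg_one hy.1 (by linarith)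
  rw [← sub_eq_add_neg] at hle
  nlinarith [mul_le_mul_of_nonneg_left hle (by linarith : 0 ≤ p),
    mul_le_mul_of_nonneg_left hge (by linarith : 0 ≤ p - 1)]

theorem one_add_rpow_one_sub_le_self_add_one_sub_rpow {p : ℝ} (hp₁ : 1 ≤ p) (hp₂ : p ≤ 2)
    {x : ℝ} (hx₀ : 0 ≤ x) (hx₁ : x < 1) : (1 + x) ^ (1 - p) ≤ x + (1 - x) ^ p := by
  have hmono : MonotoneOn (fun y : ℝ ↦ y + (1 - y) ^ p - (1 + y) ^ (1 - p)) (Ioo (-1) 1) := by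
    refine monotoneOn_of_hasDerivWithinAt_nonneg (convex_Ioo _ _)
      (f' := fun y ↦ 1 - p * (1 - y) ^ (p - 1) + (p - 1) * (1 + y) ^ (-p))
      (fun y hy ↦ (hasDerivAt_self_add_one_sub_rpow_sub_one_add_rpow p hy).continuousAt
        |>.continuousWithinAt) (fun y hy ↦ ?_) (fun y hy ↦ ?_)
    · rw [interior_Ioo] at hy
      exact (hasDerivAt_self_add_one_sub_rpow_sub_one_add_rpow p hy).hasDerivWithinAt
    · rw [interior_Ioo] at hy
      exact deriv_self_add_one_sub_rpow_sub_one_add_rpow_nonneg hp₁ hp₂ hy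
  have := hmono ⟨by norm_num, by norm_num⟩ ⟨by linarith, hx₁⟩ hx₀
  simp only [sub_zero, add_zero, one_rpow] at this
  linarith

/-- For `1 < p ≤ 2` and `z ≥ 0`,
`z - (1+z)^p (1+2z)^(1-p) + (1+z)^(1-p) ≥ 0`. -/
theorem ineq_z (p : ℝ) (hp1 : 1 < p) (hp2 : p ≤ 2) (z : ℝ) (hz : 0 ≤ z) :
    0 ≤ z - (1 + z) ^ p * (1 + 2 * z) ^ (1 - p) + (1 + z) ^ (1 - p) := by
  have hz₁ : 0 < 1 + z := by linarith
  have hx₀ : 0 ≤ z / (1 + z) := div_nonneg hz hz₁.le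
  have hx₁ : z / (1 + z) < 1 := (div_lt_one hz₁).2 (by linarith)
  have h_one_sub : 1 - z / (1 + z) = (1 + z)⁻¹ := by field_simp; ring
  have h_one_add : 1 + z / (1 + z) = (1 + 2 * z) / (1 + z) := by field_simp; ring
  have hkey := one_add_rpow_one_sub_le_self_add_one_sub_rpow hp1.le hp2 hx₀ hx₁
  rw [h_one_sub, h_one_add] at hkey
  calc 0 ≤ (1 + z) * (z / (1 + z) + (1 + z)⁻¹ ^ p - ((1 + 2 * z) / (1 + z)) ^ (1 - p)) :=
        mul_nonneg hz₁.le (by linarith)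
    _ = z - (1 + z) ^ p * (1 + 2 * z) ^ (1 - p) + (1 + z) ^ (1 - p) := by
      rw [inv_rpow hz₁.le, div_rpow (by linarith) hz₁.le, rpow_sub hz₁, rpow_one]
      field_simp
      ring
end

section
/- Let $1 < p \leq 2$ and let $x, y$ be positive reals with $y \geq x$. Then $x - (x+y)^p (2x+y)^{1-p} + y^p (x+y)^{1-p} \geq 0$. -/
/-!
Dividing by `x + y` and writing `t = x / (x + y) ∈ (0, 1)`, the inequality becomes
`(1 + t) ^ (1 - p) ≤ t + (1 - t) ^ p`. Weighted AM-GM with weights `t, 1 - t` on `1` and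
`(1 - t) ^ (p - 1)` bounds the right side below by `((1 - t) ^ (1 - t)) ^ (p - 1)`, and Bernoulli's
inequality gives `(1 - t) ^ (1 - t) ≥ (1 + t)⁻¹`.
-/

open Real

lemma inv_one_add_le_one_sub_rpow_self {t : ℝ} (ht0 : 0 ≤ t) (ht1 : t < 1) :
    (1 + t)⁻¹ ≤ (1 - t) ^ (1 - t) := by
  have h1t : 0 < 1 - t := by linarith
  -- Bernoulli at `1 + t / (1 - t) = (1 - t)⁻¹` with exponent `1 - t ∈ (0, 1]`
  have bernoulli := rpow_one_add_le_one_add_mul_self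
    (by linarith [div_nonneg ht0 h1t.le] : -1 ≤ t / (1 - t)) h1t.le (by linarith : 1 - t ≤ 1)
  rw [show 1 + t / (1 - t) = (1 - t)⁻¹ by field_simp; ring,
    mul_div_cancel₀ t h1t.ne', inv_rpow h1t.le] at bernoulli
  exact inv_le_of_inv_le₀ (by positivity) bernoulli

lemma one_add_rpow_one_sub_le {t p : ℝ} (ht0 : 0 ≤ t) (ht1 : t < 1) (hp : 1 ≤ p) :
    (1 + t) ^ (1 - p) ≤ t + (1 - t) ^ p := by
  have h1t : 0 ≤ 1 - t := by linarith
  calc (1 + t) ^ (1 - p) = ((1 + t)⁻¹) ^ (p - 1) := by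
        rw [inv_rpow (by linarith), ← rpow_neg (by linarith), neg_sub]
    _ ≤ ((1 - t) ^ (1 - t)) ^ (p - 1) :=
        rpow_le_rpow (by positivity) (inv_one_add_le_one_sub_rpow_self ht0 ht1) (by linarith)
    _ = 1 ^ t * ((1 - t) ^ (p - 1)) ^ (1 - t) := by
        rw [one_rpow, one_mul, ← rpow_mul h1t, ← rpow_mul h1t, mul_comm]
    _ ≤ t * 1 + (1 - t) * (1 - t) ^ (p - 1) :=
        geom_mean_le_arith_mean2_weighted ht0 h1t zero_le_one (by positivity) (by ring)
    _ = t + (1 - t) ^ p := by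
        rw [mul_one, ← rpow_one_add' h1t (by linarith), add_sub_cancel]

lemma mul_rpow_mul_mul_rpow_one_sub {s a b : ℝ} (hs : 0 ≤ s) (ha : 0 ≤ a) (hb : 0 ≤ b)
    (p : ℝ) : (s * a) ^ p * (s * b) ^ (1 - p) = s * (a ^ p * b ^ (1 - p)) := by
  rw [mul_rpow hs ha, mul_rpow hs hb, mul_mul_mul_comm, ← rpow_add' hs (by simp),
    add_sub_cancel, rpow_one]

theorem ineq_xy_general (p : ℝ) (hp1 : 1 < p) (x y : ℝ)
    (hx : 0 < x) (hy : 0 < y) :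
    0 ≤ x - (x + y) ^ p * (2 * x + y) ^ (1 - p) + y ^ p * (x + y) ^ (1 - p) := by
  obtain ⟨s, t, hs, ht0, ht1, rfl, rfl⟩ :
      ∃ s t : ℝ, 0 < s ∧ 0 ≤ t ∧ t < 1 ∧ x = s * t ∧ y = s * (1 - t) := by
    have hsum : 0 < x + y := by linarith
    refine ⟨x + y, x / (x + y), hsum, by positivity, (div_lt_one hsum).2 (by linarith), ?_, ?_⟩
    · field_simp
    · field_simp; ring
  rw [show s * t + s * (1 - t) = s * 1 by ring,
    show 2 * (s * t) + s * (1 - t) = s * (1 + t) by ring,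
    mul_rpow_mul_mul_rpow_one_sub hs.le zero_le_one (by linarith),
    mul_rpow_mul_mul_rpow_one_sub hs.le (by linarith) zero_le_one, one_rpow, one_rpow, one_mul,
    mul_one]
  have key := mul_le_mul_of_nonneg_left (one_add_rpow_one_sub_le ht0 ht1 hp1.le) hs.le
  linarith [mul_add s t ((1 - t) ^ p)]

/-- Homogeneous form: for `1 < p ≤ 2` and positive reals `x ≤ y`,
`x - (x+y)^p (2x+y)^(1-p) + y^p (x+y)^(1-p) ≥ 0`. -/
theorem ineq_xy (p : ℝ) (hp1 : 1 < p) (hp2 : p ≤ 2) (x y : ℝ)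
    (hx : 0 < x) (hy : 0 < y) (hxy : x ≤ y) :
    0 ≤ x - (x + y) ^ p * (2 * x + y) ^ (1 - p) + y ^ p * (x + y) ^ (1 - p) :=
  ineq_xy_general p hp1 x y hx hy
end

section
/- Let $1 \leq p \leq 2$ and let $(\lambda_k)_{k \geq 1}$ be a positive, non-increasing sequence. Set $\Lambda_k = \sum_{i=1}^k \lambda_i$ and $C_{k} = \Lambda_k^p / \sum_{i=1}^k \lambda_i \Lambda_i^{p-1}$. Then for every $k \geq 1$, $C_k \leq C_{k+1}$; i.e., the sequence $(C_k)$ is non-decreasing in $k$. -/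
/-- Concavity step: for `0 < A`, `0 ≤ l`, `1 ≤ p ≤ 2`,
`(A+l)^(p-1) ≤ A^(p-2) * (A + (p-1)*l)`. -/
lemma concave_step {A l p : ℝ} (hA : 0 < A) (hl : 0 ≤ l) (hp1 : 1 ≤ p) (hp2 : p ≤ 2) :
    (A + l) ^ (p - 1) ≤ A ^ (p - 2) * (A + (p - 1) * l) := by
  have ht : 0 ≤ l / A := by positivity
  have h1 : (1 + l / A) ^ (p - 1) ≤ 1 + (p - 1) * (l / A) :=
    rpow_one_add_le_one_add_mul_self (by linarith) (by linarith) (by linarith)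
  have h2 : A + l = A * (1 + l / A) := by field_simp
  have e2 : A ^ (p - 1) = A * A ^ (p - 2) := by
    have h := Real.rpow_add hA 1 (p - 2)
    rw [show (1:ℝ) + (p - 2) = p - 1 by ring, Real.rpow_one] at h
    exact h
  have h3 : A * (1 + (p - 1) * (l / A)) = A + (p - 1) * l := by field_simp
  calc (A + l) ^ (p - 1) = A ^ (p - 1) * (1 + l / A) ^ (p - 1) := by
        rw [h2, Real.mul_rpow hA.le (by positivity)]
    _ ≤ A ^ (p - 1) * (1 + (p - 1) * (l / A)) :=
        mul_le_mul_of_nonneg_left h1 (by positivity)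
    _ = A ^ (p - 2) * (A * (1 + (p - 1) * (l / A))) := by rw [e2]; ring
    _ = A ^ (p - 2) * (A + (p - 1) * l) := by rw [h3]

/-- Convexity step: for `0 < A`, `0 ≤ l`, `1 ≤ p`,
`p * l * A^(p-1) ≤ (A+l)^p - A^p`. -/
lemma convex_step {A l p : ℝ} (hA : 0 < A) (hl : 0 ≤ l) (hp1 : 1 ≤ p) :
    p * l * A ^ (p - 1) ≤ (A + l) ^ p - A ^ p := by
  have h1 : 1 + p * (l / A) ≤ (1 + l / A) ^ p :=
    one_add_mul_self_le_rpow_one_add (by linarith [div_nonneg hl hA.le]) hp1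
  have h2 : A + l = A * (1 + l / A) := by field_simp
  have e1 : A ^ p = A * A ^ (p - 1) := by
    have h := Real.rpow_add hA 1 (p - 1)
    rw [show (1:ℝ) + (p - 1) = p by ring, Real.rpow_one] at h
    exact h
  have key : A ^ p * (1 + p * (l / A)) ≤ (A + l) ^ p := by
    calc A ^ p * (1 + p * (l / A)) ≤ A ^ p * (1 + l / A) ^ p :=
          mul_le_mul_of_nonneg_left h1 (by positivity)
      _ = (A + l) ^ p := by rw [h2, Real.mul_rpow hA.le (by positivity)]
  have e3 : A ^ p * (1 + p * (l / A)) = A ^ p + p * l * A ^ (p - 1) := by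
    rw [e1]; field_simp
  linarith [key, e3.symm.le, e3.le]

/-- For `1 ≤ p ≤ 2` and a positive non-increasing sequence `lam`, the sequence
`C k = Λ_k^p / ∑_{i=1}^k lam i * Λ_i^(p-1)` is non-decreasing. -/
theorem C_monotone (p : ℝ) (hp1 : 1 ≤ p) (hp2 : p ≤ 2) (lam : ℕ → ℝ)
    (hpos : ∀ k, 1 ≤ k → 0 < lam k) (hmono : ∀ k, 1 ≤ k → lam (k + 1) ≤ lam k)
    (Lam : ℕ → ℝ) (hLam : ∀ k, Lam k = ∑ i ∈ Finset.Icc 1 k, lam i) :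
    ∀ k, 1 ≤ k →
      Lam k ^ p / (∑ i ∈ Finset.Icc 1 k, lam i * Lam i ^ (p - 1)) ≤
        Lam (k + 1) ^ p / (∑ i ∈ Finset.Icc 1 (k + 1), lam i * Lam i ^ (p - 1)) := by
  set S : ℕ → ℝ := fun k => ∑ i ∈ Finset.Icc 1 k, lam i * Lam i ^ (p - 1) with hS
  have hLpos : ∀ k, 1 ≤ k → 0 < Lam k := by
    intro k hk
    rw [hLam]
    apply Finset.sum_pos
    · intro i hi
      exact hpos i (Finset.mem_Icc.mp hi).1
    · exact ⟨1, Finset.mem_Icc.mpr ⟨le_refl 1, hk⟩⟩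
  have hLsucc : ∀ k, 1 ≤ k → Lam (k + 1) = Lam k + lam (k + 1) := by
    intro k hk
    rw [hLam, hLam, Finset.sum_Icc_succ_top (by omega : 1 ≤ k + 1)]
  have hSpos : ∀ k, 1 ≤ k → 0 < S k := by
    intro k hk
    apply Finset.sum_pos
    · intro i hi
      have hi1 := (Finset.mem_Icc.mp hi).1
      exact mul_pos (hpos i hi1) (Real.rpow_pos_of_pos (hLpos i hi1) _)
    · exact ⟨1, Finset.mem_Icc.mpr ⟨le_refl 1, hk⟩⟩
  have hSsucc : ∀ k, 1 ≤ k → S (k + 1) = S k + lam (k + 1) * Lam (k + 1) ^ (p - 1) := by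
    intro k hk
    simp only [hS]
    rw [Finset.sum_Icc_succ_top (by omega : 1 ≤ k + 1)]
  -- the key invariant
  have star : ∀ k, 1 ≤ k → Lam k ^ (p - 1) * (Lam k + (p - 1) * lam (k + 1)) ≤ p * S k := by
    intro k hk
    induction k, hk using Nat.le_induction with
    | base =>
      have hL1 : Lam 1 = lam 1 := by rw [hLam]; simp
      have hS1 : S 1 = lam 1 * Lam 1 ^ (p - 1) := by simp [hS]
      have h1 := hpos 1 le_rfl
      have h2 := hmono 1 le_rfl
      have h3 : (0:ℝ) < lam 1 ^ (p - 1) := Real.rpow_pos_of_pos h1 _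
      rw [hS1, hL1]
      nlinarith [mul_nonneg (mul_nonneg (by linarith : (0:ℝ) ≤ p - 1)
        (by linarith : (0:ℝ) ≤ lam 1 - lam (1 + 1))) h3.le]
    | succ k hk IH =>
      have hA := hLpos k hk
      have hl := hpos (k + 1) (by omega)
      have hl' := hmono (k + 1) (by omega)
      have hB : Lam (k + 1) = Lam k + lam (k + 1) := hLsucc k hk
      have hconc : Lam (k + 1) ^ (p - 1) ≤
          Lam k ^ (p - 2) * (Lam k + (p - 1) * lam (k + 1)) := by
        rw [hB]; exact concave_step hA hl.le hp1 hp2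
      have e2 : Lam k ^ (p - 1) = Lam k * Lam k ^ (p - 2) := by
        have h := Real.rpow_add hA 1 (p - 2)
        rw [show (1:ℝ) + (p - 2) = p - 1 by ring, Real.rpow_one] at h
        exact h
      have hBpos : (0:ℝ) < Lam (k + 1) ^ (p - 1) :=
        Real.rpow_pos_of_pos (hLpos (k + 1) (by omega)) _
      rw [hSsucc k hk]
      -- goal : Lam (k+1)^(p-1) * (Lam (k+1) + (p-1) * lam (k+2)) ≤ p * (S k + lam (k+1) * Lam (k+1)^(p-1))
      have step1 : Lam (k + 1) ^ (p - 1) * (Lam (k + 1) + (p - 1) * lam (k + 1 + 1)) ≤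
          Lam (k + 1) ^ (p - 1) * (Lam (k + 1) + (p - 1) * lam (k + 1)) := by
        apply mul_le_mul_of_nonneg_left _ hBpos.le
        nlinarith
      have step2 : Lam (k + 1) ^ (p - 1) * Lam k ≤
          Lam k ^ (p - 1) * (Lam k + (p - 1) * lam (k + 1)) := by
        calc Lam (k + 1) ^ (p - 1) * Lam k ≤
            Lam k ^ (p - 2) * (Lam k + (p - 1) * lam (k + 1)) * Lam k := by
              apply mul_le_mul_of_nonneg_right hconc hA.le
          _ = Lam k ^ (p - 1) * (Lam k + (p - 1) * lam (k + 1)) := by rw [e2]; ring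
      calc Lam (k + 1) ^ (p - 1) * (Lam (k + 1) + (p - 1) * lam (k + 1 + 1)) ≤
          Lam (k + 1) ^ (p - 1) * (Lam (k + 1) + (p - 1) * lam (k + 1)) := step1
        _ = Lam (k + 1) ^ (p - 1) * Lam k + p * (lam (k + 1) * Lam (k + 1) ^ (p - 1)) := by
            rw [hB]; ring
        _ ≤ Lam k ^ (p - 1) * (Lam k + (p - 1) * lam (k + 1)) +
            p * (lam (k + 1) * Lam (k + 1) ^ (p - 1)) := by linarith
        _ ≤ p * S k + p * (lam (k + 1) * Lam (k + 1) ^ (p - 1)) := by linarith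
        _ = p * (S k + lam (k + 1) * Lam (k + 1) ^ (p - 1)) := by ring
  -- main proof
  intro k hk
  have hA := hLpos k hk
  have hl := hpos (k + 1) (by omega)
  have hB : Lam (k + 1) = Lam k + lam (k + 1) := hLsucc k hk
  have hSk := hSpos k hk
  have hSk1 := hSpos (k + 1) (by omega)
  rw [div_le_div_iff₀ hSk hSk1]
  have h1 : p * lam (k + 1) * Lam k ^ (p - 1) ≤ Lam (k + 1) ^ p - Lam k ^ p := by
    rw [hB]; exact convex_step hA hl.le hp1
  have h2 := star k hk
  have h3 : Lam (k + 1) ^ (p - 1) ≤ Lam k ^ (p - 2) * (Lam k + (p - 1) * lam (k + 1)) := by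
    rw [hB]; exact concave_step hA hl.le hp1 hp2
  have e1 : Lam k ^ p = Lam k * Lam k ^ (p - 1) := by
    have h := Real.rpow_add hA 1 (p - 1)
    rw [show (1:ℝ) + (p - 1) = p by ring, Real.rpow_one] at h
    exact h
  have e2 : Lam k ^ (p - 1) = Lam k * Lam k ^ (p - 2) := by
    have h := Real.rpow_add hA 1 (p - 2)
    rw [show (1:ℝ) + (p - 2) = p - 1 by ring, Real.rpow_one] at h
    exact h
  have key : lam (k + 1) * Lam k ^ p * Lam (k + 1) ^ (p - 1) ≤
      (Lam (k + 1) ^ p - Lam k ^ p) * S k := by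
    calc lam (k + 1) * Lam k ^ p * Lam (k + 1) ^ (p - 1)
        ≤ lam (k + 1) * Lam k ^ p * (Lam k ^ (p - 2) * (Lam k + (p - 1) * lam (k + 1))) :=
          mul_le_mul_of_nonneg_left h3 (by positivity)
      _ = lam (k + 1) * Lam k ^ (p - 1) * (Lam k ^ (p - 1) * (Lam k + (p - 1) * lam (k + 1))) := by
          rw [e1, e2]; ring
      _ ≤ lam (k + 1) * Lam k ^ (p - 1) * (p * S k) :=
          mul_le_mul_of_nonneg_left h2 (by positivity)
      _ = (p * lam (k + 1) * Lam k ^ (p - 1)) * S k := by ring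
      _ ≤ (Lam (k + 1) ^ p - Lam k ^ p) * S k :=
          mul_le_mul_of_nonneg_right h1 hSk.le
  have hSs := hSsucc k hk
  rw [hSs]
  nlinarith [key]
end

section
/- Let $1 < p \leq 2$ and let $(\lambda_k)$ be a positive, non-increasing sequence with partial sums $\Lambda_k = \sum_{i=1}^k \lambda_i$. Then for every $k \geq 1$, $\frac{\Lambda_{k+1}^p - \Lambda_k^p}{\lambda_{k+1} \Lambda_{k+1}^{p-1}} \leq \frac{\Lambda_{k+2}^p - \Lambda_{k+1}^p}{\lambda_{k+2} \Lambda_{k+2}^{p-1}}$. -/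
/-!
Writing `u = Λ_k / Λ_{k+1}`, homogeneity of `t ↦ t ^ p` turns the `k`-th ratio into the slope
`(u ^ p - 1) / (u - 1)` of the chord of `t ↦ t ^ p` between `u` and `1`. Since `λ` is non-increasing,
`Λ_k / Λ_{k+1} ≤ Λ_{k+1} / Λ_{k+2}`, and the chord slopes of a convex function through a fixed point
increase with the other endpoint.
-/

open Finset Set

theorem rpow_increment_ratio_eq_slope {p A a : ℝ} (hA : 0 ≤ A) (ha : 0 < a) :
    ((A + a) ^ p - A ^ p) / (a * (A + a) ^ (p - 1)) =
      ((A / (A + a)) ^ p - 1 ^ p) / (A / (A + a) - 1) := by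
  have hB : 0 < A + a := by linarith
  have hBp : 0 < (A + a) ^ p := Real.rpow_pos_of_pos hB p
  have hsub : A / (A + a) - 1 = -(a / (A + a)) := by field_simp; ring
  rw [hsub, Real.div_rpow hA hB.le, Real.one_rpow, Real.rpow_sub_one hB.ne' p]
  field_simp
  ring

theorem rpow_increment_ratio_le {p A a b : ℝ} (hp : 1 ≤ p) (hA : 0 ≤ A) (hb : 0 < b)
    (hba : b ≤ a) :
    ((A + a) ^ p - A ^ p) / (a * (A + a) ^ (p - 1)) ≤
      ((A + a + b) ^ p - (A + a) ^ p) / (b * (A + a + b) ^ (p - 1)) := by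
  have ha : 0 < a := hb.trans_le hba
  rw [rpow_increment_ratio_eq_slope hA ha, rpow_increment_ratio_eq_slope (by positivity) hb]
  have hu_le : A / (A + a) ≤ (A + a) / (A + a + b) := by
    rw [div_le_div_iff₀ (by positivity) (by positivity)]
    nlinarith
  refine (convexOn_rpow hp).secant_mono (mem_Ici.2 zero_le_one) (mem_Ici.2 (by positivity))
    (mem_Ici.2 (by positivity)) ?_ ?_ hu_le
  · rw [Ne, div_eq_one_iff_eq (by positivity)]
    linarith
  · rw [Ne, div_eq_one_iff_eq (by positivity)]
    linarith

theorem diff_ratio_monotone_general (p : ℝ) (hp1 : 1 < p) (lam : ℕ → ℝ)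
    (hpos : ∀ k, 1 ≤ k → 0 < lam k) (hmono : ∀ k, 1 ≤ k → lam (k + 1) ≤ lam k)
    (Lam : ℕ → ℝ) (hLam : ∀ k, Lam k = ∑ i ∈ Finset.Icc 1 k, lam i) :
    ∀ k, 1 ≤ k →
      (Lam (k + 1) ^ p - Lam k ^ p) / (lam (k + 1) * Lam (k + 1) ^ (p - 1)) ≤
        (Lam (k + 2) ^ p - Lam (k + 1) ^ p) / (lam (k + 2) * Lam (k + 2) ^ (p - 1)) := by
  intro k _
  have hLam_succ : ∀ n, Lam (n + 1) = Lam n + lam (n + 1) := fun n => by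
    rw [hLam, hLam, sum_Icc_succ_top (Nat.le_add_left 1 n)]
  have hLam_nonneg : 0 ≤ Lam k := by
    rw [hLam]
    exact sum_nonneg fun i hi => (hpos i (mem_Icc.1 hi).1).le
  rw [hLam_succ (k + 1), hLam_succ k]
  exact rpow_increment_ratio_le hp1.le hLam_nonneg (hpos _ (by omega)) (hmono _ (by omega))

/-- For `1 < p ≤ 2` and a positive non-increasing sequence `lam` with partial
sums `Λ`, the ratios `(Λ_{k+1}^p - Λ_k^p)/(lam_{k+1} Λ_{k+1}^{p-1})` are
non-decreasing in `k`. -/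
theorem diff_ratio_monotone (p : ℝ) (hp1 : 1 < p) (hp2 : p ≤ 2) (lam : ℕ → ℝ)
    (hpos : ∀ k, 1 ≤ k → 0 < lam k) (hmono : ∀ k, 1 ≤ k → lam (k + 1) ≤ lam k)
    (Lam : ℕ → ℝ) (hLam : ∀ k, Lam k = ∑ i ∈ Finset.Icc 1 k, lam i) :
    ∀ k, 1 ≤ k →
      (Lam (k + 1) ^ p - Lam k ^ p) / (lam (k + 1) * Lam (k + 1) ^ (p - 1)) ≤
        (Lam (k + 2) ^ p - Lam (k + 1) ^ p) / (lam (k + 2) * Lam (k + 2) ^ (p - 1)) :=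
  diff_ratio_monotone_general p hp1 lam hpos hmono Lam hLam
end

section
/- Let $1 \leq p \leq 2$, let $n \geq 1$, let $(\lambda_k)_{1 \leq k \leq n}$ be a non-negative, non-increasing finite sequence with $\lambda_1 > 0$, and set $\Lambda_k = \sum_{i=1}^k \lambda_i$ and $C_{n,p,\lambda} = \Lambda_n^p / \sum_{i=1}^n \lambda_i \Lambda_i^{p-1}$. Then for every non-negative, non-increasing sequence $(a_k)_{1 \leq k \leq n}$, $\left(\sum_{k=1}^n \lambda_k a_k\right)^p \leq C_{n,p,\lambda} \sum_{k=1}^n \lambda_k a_k \left(\sum_{i=1}^k \lambda_i a_i\right)^{p-1}$. -/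
/-!
Put `q = p - 1`, `S_k = ∑_{i ≤ k} λ_i a_i` and `V_k = (Λ_n / S_n) S_k`. Since `a` is
non-increasing, Chebyshev's sum inequality gives `Λ_k ≤ V_k`, with equality at `k = 0` and
`k = n`, and the claim becomes `∑ (Λ_k - Λ_{k-1}) Λ_k^q ≤ ∑ (V_k - V_{k-1}) V_k^q`:
a comparison of right Riemann–Stieltjes sums of `x ↦ x^q` along the concave sequence `Λ`
and along the sequence `V` lying above it with the same endpoints.

For `x ↦ x` the sum is `(V_n^2 - V_0^2 + ∑ (V_k - V_{k-1})^2) / 2`, and the increments of `Λ`,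
being non-increasing, have the smaller sum of squares (Abel summation against `V - Λ ≥ 0`).
Truncating both sequences at height `s` preserves the hypotheses and shifts both sums by the same
amount, which gives the comparison for `x ↦ min x s`. Finally, for `0 < q < 1` and `0 < x ≤ T`,
`x^q = q(1-q) ∫_0^T min x s · s^(q-2) ds + q T^(q-1) x`, a positive mixture of these.
-/

open Finset intervalIntegral
open MeasureTheory (volume)

lemma sum_Icc_one_eq_sum_range {M : Type*} [AddCommMonoid M] (f : ℕ → M) (n : ℕ) :
    ∑ i ∈ Icc 1 n, f i = ∑ i ∈ range n, f (i + 1) := by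
  rw [range_eq_Ico, sum_Ico_add', zero_add, Ico_add_one_right_eq_Icc]

lemma monotoneOn_sum_Icc {w : ℕ → ℝ} {n : ℕ} (hw : ∀ k ∈ Icc 1 n, 0 ≤ w k) :
    MonotoneOn (fun k => ∑ i ∈ Icc 1 k, w i) (Set.Iic n) :=
  monotoneOn_of_le_add_one Set.ordConnected_Iic fun k _ _ hk => by
    rw [sum_Icc_succ_top (by omega)]
    exact le_add_of_nonneg_right (hw _ (mem_Icc.2 ⟨by omega, hk⟩))

lemma antitoneOn_sum_Icc_succ_sub {w : ℕ → ℝ} {n : ℕ} (hw : AntitoneOn w (Set.Icc 1 n)) :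
    AntitoneOn (fun k => ∑ i ∈ Icc 1 (k + 1), w i - ∑ i ∈ Icc 1 k, w i) (Set.Iio n) := by
  intro i hi j hj hij
  simp only [sum_Icc_succ_top (Nat.le_add_left 1 _), add_sub_cancel_left]
  simp only [Set.mem_Iio] at hi hj
  exact hw ⟨by omega, by omega⟩ ⟨by omega, by omega⟩ (by omega)

lemma sum_mul_rpow_sum_Icc_pos {w : ℕ → ℝ} {n : ℕ} (q : ℝ) (hn : 1 ≤ n)
    (hw0 : ∀ k ∈ Icc 1 n, 0 ≤ w k) (hw1 : 0 < w 1) :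
    0 < ∑ k ∈ Icc 1 n, w k * (∑ i ∈ Icc 1 k, w i) ^ q := by
  refine sum_pos' (fun k hk => mul_nonneg (hw0 k hk) (Real.rpow_nonneg (sum_nonneg fun i hi =>
    hw0 i (mem_Icc.2 ⟨(mem_Icc.1 hi).1, (mem_Icc.1 hi).2.trans (mem_Icc.1 hk).2⟩)) _))
    ⟨1, mem_Icc.2 ⟨le_rfl, hn⟩, mul_pos hw1 (Real.rpow_pos_of_pos ?_ _)⟩
  simpa using hw1

lemma sum_mul_sum_le_sum_mul_sum {ι : Type*} {A B : Finset ι} {w f : ι → ℝ}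
    (hwA : ∀ j ∈ A, 0 ≤ w j) (hwB : ∀ k ∈ B, 0 ≤ w k)
    (hf : ∀ j ∈ A, ∀ k ∈ B, f k ≤ f j) :
    (∑ j ∈ A, w j) * ∑ k ∈ B, w k * f k ≤
      (∑ k ∈ B, w k) * ∑ j ∈ A, w j * f j := by
  rw [sum_mul_sum, sum_mul_sum, sum_comm (s := B)]
  refine sum_le_sum fun j hj => sum_le_sum fun k hk => ?_
  linear_combination mul_le_mul_of_nonneg_left (hf j hj k hk) (mul_nonneg (hwA j hj) (hwB k hk))

lemma sum_Icc_mul_sum_Icc_le {w f : ℕ → ℝ} {i n : ℕ} (hw : ∀ k ∈ Icc 1 n, 0 ≤ w k)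
    (hf : AntitoneOn f (Set.Icc 1 n)) (hi : i ≤ n) :
    (∑ k ∈ Icc 1 i, w k) * ∑ k ∈ Icc 1 n, w k * f k ≤
      (∑ k ∈ Icc 1 n, w k) * ∑ k ∈ Icc 1 i, w k * f k := by
  have split (g : ℕ → ℝ) :
      ∑ k ∈ Icc 1 n, g k = ∑ k ∈ Icc 1 i, g k + ∑ k ∈ Ioc i n, g k := by
    rw [← zero_add 1, Icc_add_one_left_eq_Ioc, Icc_add_one_left_eq_Ioc]
    exact (sum_Ioc_consecutive g i.zero_le hi).symm
  have key : (∑ k ∈ Icc 1 i, w k) * ∑ k ∈ Ioc i n, w k * f k ≤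
      (∑ k ∈ Ioc i n, w k) * ∑ k ∈ Icc 1 i, w k * f k := by
    refine sum_mul_sum_le_sum_mul_sum (fun j hj => hw j ?_) (fun k hk => hw k ?_)
      fun j hj k hk => hf ?_ ?_ ?_ <;> simp only [mem_Icc, mem_Ioc, Set.mem_Icc] at * <;> omega
  rw [split, split]
  linear_combination key

def rightSum (φ : ℝ → ℝ) (W : ℕ → ℝ) (n : ℕ) : ℝ :=
  ∑ i ∈ range n, (W (i + 1) - W i) * φ (W (i + 1))

lemma rightSum_sum_Icc (φ : ℝ → ℝ) (w : ℕ → ℝ) (n : ℕ) :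
    rightSum φ (fun k => ∑ i ∈ Icc 1 k, w i) n =
      ∑ k ∈ Icc 1 n, w k * φ (∑ i ∈ Icc 1 k, w i) := by
  rw [rightSum, sum_Icc_one_eq_sum_range]
  refine sum_congr rfl fun i _ => ?_
  rw [sum_Icc_succ_top (by omega), add_sub_cancel_left]

lemma rightSum_rpow_const_mul {q c : ℝ} {W : ℕ → ℝ} {n : ℕ} (hc : 0 < c)
    (hW : ∀ i < n, 0 ≤ W (i + 1)) :
    rightSum (· ^ q) (fun k => c * W k) n = c ^ (q + 1) * rightSum (· ^ q) W n := by
  rw [rightSum, rightSum, mul_sum]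
  refine sum_congr rfl fun i hi => ?_
  rw [Real.mul_rpow hc.le (hW i (mem_range.1 hi)), Real.rpow_add_one hc.ne']
  ring

lemma sum_mul_sub_nonneg_of_antitoneOn {y E : ℕ → ℝ} {n : ℕ} (hy : AntitoneOn y (Set.Iio n))
    (hE : ∀ i ≤ n, 0 ≤ E i) (h0 : E 0 = 0) (hn : E n = 0) :
    0 ≤ ∑ i ∈ range n, y i * (E (i + 1) - E i) := by
  have := sum_range_by_parts y (fun i => E (i + 1) - E i) n
  simp only [smul_eq_mul, sum_range_sub, h0, hn, sub_zero, mul_zero, zero_sub] at this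
  rw [this, neg_nonneg]
  refine sum_nonpos fun i hi => mul_nonpos_of_nonpos_of_nonneg ?_ (hE _ ?_)
  · rw [mem_range] at hi
    exact sub_nonpos.2 (hy (by simp; omega) (by simp; omega) i.le_succ)
  · rw [mem_range] at hi; omega

lemma sum_sq_sub_le {L U : ℕ → ℝ} {n : ℕ}
    (hLc : AntitoneOn (fun i => L (i + 1) - L i) (Set.Iio n))
    (hLU : ∀ i ≤ n, L i ≤ U i) (h0 : L 0 = U 0) (hn : L n = U n) :
    ∑ i ∈ range n, (L (i + 1) - L i) ^ 2 ≤ ∑ i ∈ range n, (U (i + 1) - U i) ^ 2 := by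
  have hcross := sum_mul_sub_nonneg_of_antitoneOn (E := U - L) hLc
    (fun i hi => sub_nonneg.2 (hLU i hi)) (by simp [h0]) (by simp [hn])
  have hsq : 0 ≤ ∑ i ∈ range n, ((U - L) (i + 1) - (U - L) i) ^ 2 :=
    sum_nonneg fun i _ => sq_nonneg _
  have hexp : ∑ i ∈ range n, (U (i + 1) - U i) ^ 2 = ∑ i ∈ range n, (L (i + 1) - L i) ^ 2 +
      2 * ∑ i ∈ range n, (L (i + 1) - L i) * ((U - L) (i + 1) - (U - L) i) +
      ∑ i ∈ range n, ((U - L) (i + 1) - (U - L) i) ^ 2 := by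
    rw [mul_sum, ← sum_add_distrib, ← sum_add_distrib]
    exact sum_congr rfl fun i _ => by simp only [Pi.sub_apply]; ring
  linarith

lemma two_mul_rightSum_id (W : ℕ → ℝ) (n : ℕ) :
    2 * rightSum id W n = W n ^ 2 - W 0 ^ 2 + ∑ i ∈ range n, (W (i + 1) - W i) ^ 2 := by
  rw [rightSum, mul_sum, ← sum_range_sub (fun i => W i ^ 2), ← sum_add_distrib]
  exact sum_congr rfl fun i _ => by simp only [id]; ring

lemma rightSum_id_le {L U : ℕ → ℝ} {n : ℕ}
    (hLc : AntitoneOn (fun i => L (i + 1) - L i) (Set.Iio n))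
    (hLU : ∀ i ≤ n, L i ≤ U i) (h0 : L 0 = U 0) (hn : L n = U n) :
    rightSum id L n ≤ rightSum id U n := by
  have h2L := two_mul_rightSum_id L n
  have h2U := two_mul_rightSum_id U n
  rw [h0, hn] at h2L
  linarith [sum_sq_sub_le hLc hLU h0 hn]

lemma sub_mul_min_eq {w w' : ℝ} (s : ℝ) (h : w ≤ w') :
    (w' - w) * min w' s =
      (min w' s - min w s) * min w' s + s * ((w' - min w' s) - (w - min w s)) := by
  simp only [min_def]
  split_ifs <;> first | (exfalso; linarith) | ring

lemma rightSum_min_eq {W : ℕ → ℝ} {n : ℕ} (s : ℝ) (hW : MonotoneOn W (Set.Iic n)) :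
    rightSum (min · s) W n = rightSum id (fun i => min (W i) s) n +
      s * ((W n - min (W n) s) - (W 0 - min (W 0) s)) := by
  rw [rightSum, rightSum, ← sum_range_sub (fun i => W i - min (W i) s), mul_sum,
    ← sum_add_distrib]
  refine sum_congr rfl fun i hi => sub_mul_min_eq s (hW ?_ ?_ i.le_succ) <;>
    simp only [Set.mem_Iic] <;> rw [mem_range] at hi <;> omega

lemma min_sub_min_le_min_sub_min {a b c d : ℝ} (s : ℝ) (hac : a ≤ c) (hcd : c ≤ d)
    (h : d - c ≤ b - a) : min d s - min c s ≤ min b s - min a s := by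
  simp only [min_def]
  split_ifs <;> linarith

lemma rightSum_min_le {L U : ℕ → ℝ} {n : ℕ} (s : ℝ) (hL : MonotoneOn L (Set.Iic n))
    (hLc : AntitoneOn (fun i => L (i + 1) - L i) (Set.Iio n)) (hU : MonotoneOn U (Set.Iic n))
    (hLU : ∀ i ≤ n, L i ≤ U i) (h0 : L 0 = U 0) (hn : L n = U n) :
    rightSum (min · s) L n ≤ rightSum (min · s) U n := by
  rw [rightSum_min_eq s hL, rightSum_min_eq s hU, h0, hn]
  refine add_le_add (rightSum_id_le ?_ (fun i hi => min_le_min_right s (hLU i hi))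
    (by rw [h0]) (by rw [hn])) le_rfl
  intro i hi j hj hij
  simp only [Set.mem_Iio] at hi hj
  exact min_sub_min_le_min_sub_min s (hL (by simp; omega) (by simp; omega) hij)
    (hL (by simp; omega) (by simp; omega) j.le_succ) (hLc hi hj hij)

lemma min_mul_rpow_sub_two_of_mem_Ioc {q x s : ℝ} (hs : s ∈ Set.Ioc 0 x) :
    min x s * s ^ (q - 2) = s ^ (q - 1) := by
  rw [min_eq_right hs.2, show q - 1 = q - 2 + 1 by ring, Real.rpow_add_one hs.1.ne']
  ring

lemma intervalIntegrable_min_mul_rpow {q x T : ℝ} (hq : 0 < q) (hx : 0 < x) (hxT : x ≤ T) :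
    IntervalIntegrable (fun s => min x s * s ^ (q - 2)) volume 0 T := by
  have hleft : IntervalIntegrable (fun s => min x s * s ^ (q - 2)) volume 0 x := by
    have := intervalIntegrable_rpow' (a := 0) (b := x) (r := q - 1) (by linarith)
    rw [intervalIntegrable_iff_integrableOn_Ioc_of_le hx.le] at this ⊢
    exact this.congr_fun (fun s hs => (min_mul_rpow_sub_two_of_mem_Ioc hs).symm) measurableSet_Ioc
  refine hleft.trans (ContinuousOn.intervalIntegrable ?_)
  refine (continuous_const.min continuous_id).continuousOn.mul
    (continuousOn_id.rpow_const fun s hs => Or.inl ?_)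
  rw [Set.uIcc_of_le hxT] at hs
  exact (hx.trans_le hs.1).ne'

lemma integral_min_mul_rpow {q x T : ℝ} (hq0 : 0 < q) (hq1 : q < 1) (hx : 0 < x) (hxT : x ≤ T) :
    ∫ s in 0..T, min x s * s ^ (q - 2) = x ^ q / (q * (1 - q)) - x * T ^ (q - 1) / (1 - q) := by
  have hleft : ∫ s in 0..x, min x s * s ^ (q - 2) = x ^ q / q := by
    rw [integral_congr_ae (g := fun s => s ^ (q - 1)) (Filter.Eventually.of_forall
      fun s hs => min_mul_rpow_sub_two_of_mem_Ioc (by rwa [Set.uIoc_of_le hx.le] at hs)),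
      integral_rpow (Or.inl (by linarith)), sub_add_cancel, Real.zero_rpow hq0.ne', sub_zero]
  have hright : ∫ s in x..T, min x s * s ^ (q - 2) =
      x * ((T ^ (q - 1) - x ^ (q - 1)) / (q - 1)) := by
    rw [integral_congr (g := fun s => x * s ^ (q - 2)) fun s hs => by
      rw [Set.uIcc_of_le hxT] at hs; simp only [min_eq_left hs.1],
      integral_const_mul, integral_rpow (Or.inr ⟨by linarith, fun h => ?_⟩)]
    · rw [show q - 2 + 1 = q - 1 by ring]
    · rw [Set.uIcc_of_le hxT] at h
      exact hx.not_ge h.1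
  rw [← integral_add_adjacent_intervals (intervalIntegrable_min_mul_rpow hq0 hx le_rfl)
    ((intervalIntegrable_min_mul_rpow hq0 hx hxT).mono_set (by
      rw [Set.uIcc_of_le hxT, Set.uIcc_of_le (hx.le.trans hxT)]
      exact Set.Icc_subset_Icc_left hx.le)), hleft, hright, Real.rpow_sub_one hx.ne']
  have : 1 - q ≠ 0 := by linarith
  have : q - 1 ≠ 0 := by linarith
  field_simp
  ring

lemma rightSum_min_mul_rpow_eq_sum (q s : ℝ) (W : ℕ → ℝ) (n : ℕ) :
    rightSum (min · s) W n * s ^ (q - 2) =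
      ∑ i ∈ range n, (W (i + 1) - W i) * (min (W (i + 1)) s * s ^ (q - 2)) := by
  rw [rightSum, sum_mul]
  exact sum_congr rfl fun i _ => mul_assoc _ _ _

section
variable {q T : ℝ} {W : ℕ → ℝ} {n : ℕ}

lemma intervalIntegrable_rightSum_min_mul_rpow (hq : 0 < q)
    (hW : ∀ i < n, 0 < W (i + 1) ∧ W (i + 1) ≤ T) :
    IntervalIntegrable (fun s => rightSum (min · s) W n * s ^ (q - 2)) volume 0 T := by
  simp only [rightSum_min_mul_rpow_eq_sum, ← Finset.sum_fn]
  refine IntervalIntegrable.sum _ fun i hi => ?_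
  obtain ⟨hpos, hle⟩ := hW i (mem_range.1 hi)
  exact (intervalIntegrable_min_mul_rpow hq hpos hle).const_mul _

lemma rightSum_rpow_eq_integral (hq0 : 0 < q) (hq1 : q < 1)
    (hW : ∀ i < n, 0 < W (i + 1) ∧ W (i + 1) ≤ T) :
    rightSum (· ^ q) W n = q * (1 - q) * (∫ s in 0..T, rightSum (min · s) W n * s ^ (q - 2)) +
      q * T ^ (q - 1) * rightSum id W n := by
  simp only [rightSum_min_mul_rpow_eq_sum]
  rw [intervalIntegral.integral_finsetSum
    (f := fun i s => (W (i + 1) - W i) * (min (W (i + 1)) s * s ^ (q - 2))) fun i hi => ?_]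
  · rw [rightSum, rightSum, mul_sum, mul_sum, ← sum_add_distrib]
    refine sum_congr rfl fun i hi => ?_
    obtain ⟨hpos, hle⟩ := hW i (mem_range.1 hi)
    rw [integral_const_mul, integral_min_mul_rpow hq0 hq1 hpos hle]
    have : 1 - q ≠ 0 := by linarith
    field_simp
    simp only [id]
    ring
  · obtain ⟨hpos, hle⟩ := hW i (mem_range.1 hi)
    exact (intervalIntegrable_min_mul_rpow hq0 hpos hle).const_mul _

end

theorem rightSum_rpow_le {q : ℝ} {L U : ℕ → ℝ} {n : ℕ} (hq0 : 0 ≤ q) (hq1 : q ≤ 1)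
    (hL : MonotoneOn L (Set.Iic n)) (hLc : AntitoneOn (fun i => L (i + 1) - L i) (Set.Iio n))
    (hU : MonotoneOn U (Set.Iic n)) (hLU : ∀ i ≤ n, L i ≤ U i) (h0 : L 0 = U 0)
    (hn : L n = U n) (hpos : ∀ i < n, 0 < L (i + 1)) :
    rightSum (· ^ q) L n ≤ rightSum (· ^ q) U n := by
  rcases hq0.eq_or_lt with rfl | hq0
  · simp only [rightSum, Real.rpow_zero, mul_one, sum_range_sub, h0, hn, le_rfl]
  rcases hq1.eq_or_lt with rfl | hq1
  · simp only [Real.rpow_one]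
    exact rightSum_id_le hLc hLU h0 hn
  rcases n.eq_zero_or_pos with rfl | hn0
  · simp [rightSum]
  have hT : 0 < L n := by simpa [Nat.sub_add_cancel hn0] using hpos (n - 1) (by omega)
  have hLb (i : ℕ) (hi : i < n) : 0 < L (i + 1) ∧ L (i + 1) ≤ L n :=
    ⟨hpos i hi, hL (by simp; omega) (by simp) hi⟩
  have hUb (i : ℕ) (hi : i < n) : 0 < U (i + 1) ∧ U (i + 1) ≤ L n :=
    ⟨(hpos i hi).trans_le (hLU _ hi), hn ▸ hU (by simp; omega) (by simp) hi⟩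
  have hint : ∫ s in 0..L n, rightSum (min · s) L n * s ^ (q - 2) ≤
      ∫ s in 0..L n, rightSum (min · s) U n * s ^ (q - 2) :=
    integral_mono_on hT.le (intervalIntegrable_rightSum_min_mul_rpow hq0 hLb)
      (intervalIntegrable_rightSum_min_mul_rpow hq0 hUb) fun s hs =>
        mul_le_mul_of_nonneg_right (rightSum_min_le s hL hLc hU hLU h0 hn)
          (Real.rpow_nonneg hs.1 _)
  rw [rightSum_rpow_eq_integral hq0 hq1 hLb, rightSum_rpow_eq_integral hq0 hq1 hUb]
  have hq1' : 0 < 1 - q := by linarith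
  gcongr
  exact rightSum_id_le hLc hLU h0 hn

theorem rpow_mul_sum_le_rpow_mul_sum {q : ℝ} {n : ℕ} {w a : ℕ → ℝ}
    (hq0 : 0 ≤ q) (hq1 : q ≤ 1)
    (hw0 : ∀ k ∈ Icc 1 n, 0 ≤ w k) (hw : AntitoneOn w (Set.Icc 1 n)) (hw1 : 0 < w 1)
    (ha0 : ∀ k ∈ Icc 1 n, 0 ≤ a k) (ha : AntitoneOn a (Set.Icc 1 n))
    (hS : 0 < ∑ k ∈ Icc 1 n, w k * a k) :
    (∑ k ∈ Icc 1 n, w k * a k) ^ (q + 1) *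
        ∑ k ∈ Icc 1 n, w k * (∑ i ∈ Icc 1 k, w i) ^ q ≤
      (∑ k ∈ Icc 1 n, w k) ^ (q + 1) *
        ∑ k ∈ Icc 1 n, w k * a k * (∑ i ∈ Icc 1 k, w i * a i) ^ q := by
  have hn : n ≠ 0 := by rintro rfl; simp at hS
  have hwa0 (k : ℕ) (hk : k ∈ Icc 1 n) : 0 ≤ w k * a k := mul_nonneg (hw0 k hk) (ha0 k hk)
  have hW := monotoneOn_sum_Icc hw0
  have hWpos (i : ℕ) (hi : i < n) : 0 < ∑ j ∈ Icc 1 (i + 1), w j :=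
    hw1.trans_le (by simpa using hW (by simp; omega) (by simp; omega) (by omega : 1 ≤ i + 1))
  have hWn : 0 < ∑ j ∈ Icc 1 n, w j := by
    simpa [Nat.sub_add_cancel (Nat.one_le_iff_ne_zero.2 hn)] using hWpos (n - 1) (by omega)
  set c := (∑ j ∈ Icc 1 n, w j) / ∑ k ∈ Icc 1 n, w k * a k with hc_def
  have hc : 0 < c := div_pos hWn hS
  have key := rightSum_rpow_le (U := fun k => c * ∑ i ∈ Icc 1 k, w i * a i) hq0 hq1 hW
    (antitoneOn_sum_Icc_succ_sub hw)
    (fun i hi j hj hij => mul_le_mul_of_nonneg_left (monotoneOn_sum_Icc hwa0 hi hj hij) hc.le)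
    (fun i hi => by
      rw [hc_def, div_mul_eq_mul_div, le_div_iff₀ hS]
      exact sum_Icc_mul_sum_Icc_le hw0 ha hi)
    (by simp) (by rw [hc_def, div_mul_cancel₀ _ hS.ne']) hWpos
  rw [rightSum_sum_Icc, rightSum_rpow_const_mul hc fun i hi => sum_nonneg fun k hk =>
      hwa0 k (mem_Icc.2 ⟨(mem_Icc.1 hk).1, (mem_Icc.1 hk).2.trans hi⟩),
    rightSum_sum_Icc, hc_def, Real.div_rpow hWn.le hS.le, div_mul_eq_mul_div,
    le_div_iff₀ (by positivity)] at key
  linarith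

/-- Refined power rule: for `1 ≤ p ≤ 2`, a non-negative non-increasing weight
`lam` on `1..n` with `lam 1 > 0`, and any non-negative non-increasing `a` on
`1..n`, `(∑ lam_k a_k)^p ≤ C_{n,p,λ} ∑ lam_k a_k (∑_{i≤k} lam_i a_i)^{p-1}`. -/
theorem refined_power_rule (p : ℝ) (hp1 : 1 ≤ p) (hp2 : p ≤ 2) (n : ℕ) (hn : 1 ≤ n)
    (lam : ℕ → ℝ) (hlam0 : ∀ k, 1 ≤ k → k ≤ n → 0 ≤ lam k)
    (hlammono : ∀ k, 1 ≤ k → k + 1 ≤ n → lam (k + 1) ≤ lam k) (hlam1 : 0 < lam 1)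
    (Lam : ℕ → ℝ) (hLam : ∀ k, Lam k = ∑ i ∈ Finset.Icc 1 k, lam i)
    (a : ℕ → ℝ) (ha0 : ∀ k, 1 ≤ k → k ≤ n → 0 ≤ a k)
    (hamono : ∀ k, 1 ≤ k → k + 1 ≤ n → a (k + 1) ≤ a k) :
    (∑ k ∈ Finset.Icc 1 n, lam k * a k) ^ p ≤
      (Lam n ^ p / ∑ i ∈ Finset.Icc 1 n, lam i * Lam i ^ (p - 1)) *
        ∑ k ∈ Finset.Icc 1 n, lam k * a k * (∑ i ∈ Finset.Icc 1 k, lam i * a i) ^ (p - 1) := by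
  have hlam0' (k : ℕ) (hk : k ∈ Icc 1 n) : 0 ≤ lam k := hlam0 k (mem_Icc.1 hk).1 (mem_Icc.1 hk).2
  have ha0' (k : ℕ) (hk : k ∈ Icc 1 n) : 0 ≤ a k := ha0 k (mem_Icc.1 hk).1 (mem_Icc.1 hk).2
  have hterm (k : ℕ) (hk : k ∈ Icc 1 n) : 0 ≤ lam k * a k := mul_nonneg (hlam0' k hk) (ha0' k hk)
  rcases (sum_nonneg hterm).eq_or_lt with hS | hS
  · have hzero := (sum_eq_zero_iff_of_nonneg hterm).1 hS.symm
    rw [← hS, Real.zero_rpow (by linarith)]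
    exact (mul_eq_zero_of_right _ (sum_eq_zero fun k hk => by rw [hzero k hk, zero_mul])).ge
  have hD : 0 < ∑ i ∈ Icc 1 n, lam i * Lam i ^ (p - 1) := by
    simpa only [← hLam] using sum_mul_rpow_sum_Icc_pos (p - 1) hn hlam0' hlam1
  have hlam : AntitoneOn lam (Set.Icc 1 n) :=
    antitoneOn_of_add_one_le Set.ordConnected_Icc fun k _ hk hk1 => hlammono k hk.1 hk1.2
  have ha : AntitoneOn a (Set.Icc 1 n) :=
    antitoneOn_of_add_one_le Set.ordConnected_Icc fun k _ hk hk1 => hamono k hk.1 hk1.2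
  have key := rpow_mul_sum_le_rpow_mul_sum (q := p - 1) (by linarith) (by linarith)
    hlam0' hlam hlam1 ha0' ha hS
  simp only [sub_add_cancel, ← hLam] at key
  rw [div_mul_eq_mul_div, le_div_iff₀ hD]
  linarith
end

section
/- Let $1 \leq p \leq 2$, let $(\lambda_k)_{k \geq 1}$ be non-negative and non-increasing with $\lambda_1 > 0$, and $\Lambda_k = \sum_{i=1}^k \lambda_i$. Then $C_{n,p,\lambda} := \Lambda_n^p / \sum_{i=1}^n \lambda_i \Lambda_i^{p-1} \leq p$ for every $n \geq 1$. -/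
/-- Tangent line inequality for rpow: for `1 ≤ p`, `0 < a`, `0 ≤ b`,
`a^p - b^p ≤ p * a^(p-1) * (a - b)`. -/
lemma rpow_tangent {p : ℝ} (hp : 1 ≤ p) {a b : ℝ} (ha : 0 < a) (hb : 0 ≤ b) :
    a ^ p - b ^ p ≤ p * a ^ (p - 1) * (a - b) := by
  have hs : (-1 : ℝ) ≤ b / a - 1 := by
    have : 0 ≤ b / a := div_nonneg hb ha.le
    linarith
  have h := one_add_mul_self_le_rpow_one_add hs hp
  rw [show 1 + (b / a - 1) = b / a by ring] at h
  have hap : 0 < a ^ p := Real.rpow_pos_of_pos ha p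
  have h2 : (1 + p * (b / a - 1)) * a ^ p ≤ (b / a) ^ p * a ^ p := by
    exact mul_le_mul_of_nonneg_right h hap.le
  rw [Real.div_rpow hb ha.le, div_mul_cancel₀ _ (ne_of_gt hap)] at h2
  have key : a ^ (p - 1) * a = a ^ p := by
    rw [← Real.rpow_add_one (ne_of_gt ha) (p - 1)]; ring_nf
  have hba : b / a * a ^ p = b * a ^ (p - 1) := by
    rw [← key]; field_simp
  have e : (1 + p * (b / a - 1)) * a ^ p = a ^ p + p * (b / a * a ^ p) - p * a ^ p := by
    ring
  rw [e, hba, ← key] at h2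
  nlinarith [h2]

/-- For `1 ≤ p ≤ 2` and non-negative non-increasing `lam` with `lam 1 > 0`,
the constant `C_{n,p,λ} = Λ_n^p / ∑_{i=1}^n lam_i Λ_i^{p-1}` is at most `p`. -/
theorem C_le_p (p : ℝ) (hp1 : 1 ≤ p) (hp2 : p ≤ 2) (lam : ℕ → ℝ)
    (hlam0 : ∀ k, 0 ≤ lam k) (hlammono : ∀ k, lam (k + 1) ≤ lam k) (hlam1 : 0 < lam 1)
    (Lam : ℕ → ℝ) (hLam : ∀ k, Lam k = ∑ i ∈ Finset.Icc 1 k, lam i) :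
    ∀ n, 1 ≤ n →
      Lam n ^ p / (∑ i ∈ Finset.Icc 1 n, lam i * Lam i ^ (p - 1)) ≤ p := by
  have hLamnn : ∀ k, 0 ≤ Lam k := by
    intro k; rw [hLam k]; exact Finset.sum_nonneg fun i _ => hlam0 i
  have hLampos : ∀ k, 1 ≤ k → 0 < Lam k := by
    intro k hk
    rw [hLam k]
    apply Finset.sum_pos' (fun i _ => hlam0 i)
    exact ⟨1, Finset.mem_Icc.mpr ⟨le_refl 1, hk⟩, hlam1⟩
  have hdiff : ∀ k, Lam (k + 1) - Lam k = lam (k + 1) := by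
    intro k
    rw [hLam (k + 1), hLam k, Finset.sum_Icc_succ_top (Nat.le_add_left 1 k)]
    ring
  have main : ∀ n, Lam n ^ p ≤ p * ∑ i ∈ Finset.Icc 1 n, lam i * Lam i ^ (p - 1) := by
    intro n
    induction n with
    | zero =>
      simp [hLam 0, Real.zero_rpow (by positivity : p ≠ 0)]
    | succ m ih =>
      rw [Finset.sum_Icc_succ_top (Nat.le_add_left 1 m), mul_add]
      have h1 : Lam (m + 1) ^ p - Lam m ^ p ≤
          p * Lam (m + 1) ^ (p - 1) * (Lam (m + 1) - Lam m) :=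
        rpow_tangent hp1 (hLampos (m + 1) (Nat.le_add_left 1 m)) (hLamnn m)
      rw [hdiff m] at h1
      nlinarith
  intro n hn
  have hSpos : 0 < ∑ i ∈ Finset.Icc 1 n, lam i * Lam i ^ (p - 1) := by
    apply Finset.sum_pos'
    · intro i _
      exact mul_nonneg (hlam0 i) (Real.rpow_nonneg (hLamnn i) _)
    · refine ⟨1, Finset.mem_Icc.mpr ⟨le_refl 1, hn⟩, ?_⟩
      exact mul_pos hlam1 (Real.rpow_pos_of_pos (hLampos 1 le_rfl) _)
  rw [div_le_iff₀ hSpos]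
  exact main n
end

section
/- Let $p \geq 1$, let $(b_n)_{n \geq 1}$ be a non-negative sequence, let $(\lambda_n)_{n \geq 1}$ be non-negative and non-increasing with $\lambda_1 > 0$, and set $\Lambda_n = \sum_{k=1}^n \lambda_k$. If there exists $U_p > 0$ such that $\sum_{n=1}^{\infty} b_n \left(\sum_{k=1}^n \frac{\lambda_k x_k}{\Lambda_n}\right)^p \leq U_p \sum_{n=1}^{\infty} b_n x_n^p$ for all non-negative, non-increasing sequences $(x_n)$, then for every $n \geq 1$, $\sum_{k=n}^{\infty} \frac{b_k}{\Lambda_k^p} \leq \frac{U_p}{\Lambda_n^p} \sum_{k=1}^n b_k$. -/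
/-- Necessity: if the weighted Hardy inequality holds on non-negative
non-increasing sequences with constant `U`, then
`∑_{k=n}^∞ b_k/Λ_k^p ≤ (U/Λ_n^p) ∑_{k=1}^n b_k` for all `n ≥ 1`. -/
theorem hardy_necessity (p : ℝ) (hp : 1 ≤ p) (b lam : ℕ → ℝ)
    (hb : ∀ n, 0 ≤ b n) (hlam0 : ∀ n, 0 ≤ lam n)
    (hlammono : ∀ n, lam (n + 1) ≤ lam n) (hlam1 : 0 < lam 1)
    (Lam : ℕ → ℝ) (hLam : ∀ n, Lam n = ∑ k ∈ Finset.Icc 1 n, lam k)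
    (U : ℝ) (hU : 0 < U)
    (hineq : ∀ x : ℕ → ℝ, (∀ n, 0 ≤ x n) → (∀ n, x (n + 1) ≤ x n) →
      Summable (fun n => b (n + 1) * x (n + 1) ^ p) →
      Summable (fun n => b (n + 1) *
          ((∑ k ∈ Finset.Icc 1 (n + 1), lam k * x k) / Lam (n + 1)) ^ p) ∧
        (∑' n : ℕ, b (n + 1) *
            ((∑ k ∈ Finset.Icc 1 (n + 1), lam k * x k) / Lam (n + 1)) ^ p) ≤
          U * ∑' n : ℕ, b (n + 1) * x (n + 1) ^ p) :
    ∀ n, 1 ≤ n →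
      Summable (fun j : ℕ => b (n + j) / Lam (n + j) ^ p) ∧
        (∑' j : ℕ, b (n + j) / Lam (n + j) ^ p) ≤
          U / Lam n ^ p * ∑ k ∈ Finset.Icc 1 n, b k := by
  intro n hn
  have hppos : (0:ℝ) < p := lt_of_lt_of_le one_pos hp
  -- positivity of Lam
  have hLampos : ∀ m, 1 ≤ m → 0 < Lam m := by
    intro m hm
    rw [hLam]
    have h1 : (1:ℕ) ∈ Finset.Icc 1 m := by simp [hm]
    calc (0:ℝ) < lam 1 := hlam1
      _ ≤ ∑ k ∈ Finset.Icc 1 m, lam k :=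
        Finset.single_le_sum (fun k _ => hlam0 k) h1
  set x : ℕ → ℝ := fun k => if k ≤ n then 1 else 0 with hxdef
  have hx0 : ∀ k, 0 ≤ x k := by
    intro k; simp only [x]; split <;> norm_num
  have hxmono : ∀ k, x (k + 1) ≤ x k := by
    intro k; simp only [x]
    split_ifs with h1 h2
    · norm_num
    · omega
    · norm_num
    · norm_num
  have hxsummable : Summable (fun m => b (m + 1) * x (m + 1) ^ p) := by
    apply summable_of_ne_finset_zero (s := Finset.range n)
    intro m hm
    simp only [Finset.mem_range, not_lt] at hm
    have h1 : ¬ (m + 1 ≤ n) := by omega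
    simp [x, h1, Real.zero_rpow (ne_of_gt hppos)]
  obtain ⟨hsum, hle⟩ := hineq x hx0 hxmono hxsummable
  set f : ℕ → ℝ := fun m => b (m + 1) *
      ((∑ k ∈ Finset.Icc 1 (m + 1), lam k * x k) / Lam (m + 1)) ^ p with hfdef
  have hf0 : ∀ m, 0 ≤ f m := by
    intro m
    apply mul_nonneg (hb _)
    apply Real.rpow_nonneg
    apply div_nonneg
    · exact Finset.sum_nonneg fun k _ => mul_nonneg (hlam0 k) (hx0 k)
    · exact le_of_lt (hLampos _ (by omega))
  -- inner sum for m ≥ n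
  have hS : ∀ m, n ≤ m → (∑ k ∈ Finset.Icc 1 m, lam k * x k) = Lam n := by
    intro m hm
    rw [hLam]
    have hsub : Finset.Icc 1 n ⊆ Finset.Icc 1 m := Finset.Icc_subset_Icc_right hm
    rw [← Finset.sum_subset hsub]
    · apply Finset.sum_congr rfl
      intro k hk
      simp only [Finset.mem_Icc] at hk
      simp [x, hk.2]
    · intro k hk hk'
      simp only [Finset.mem_Icc] at hk hk'
      have h1 : ¬ k ≤ n := by omega
      simp [x, h1]
  obtain ⟨m0, hm0⟩ : ∃ m0, m0 + 1 = n := ⟨n - 1, by omega⟩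
  have hfshift : ∀ j : ℕ, f (j + m0) = Lam n ^ p * (b (n + j) / Lam (n + j) ^ p) := by
    intro j
    have hidx : j + m0 + 1 = n + j := by omega
    have hLe : n ≤ j + m0 + 1 := by omega
    rw [hfdef]
    simp only
    rw [hS _ hLe, hidx]
    rw [Real.div_rpow (le_of_lt (hLampos n hn)) (le_of_lt (hLampos (n + j) (by omega)))]
    have h2 : (0:ℝ) < Lam (n + j) ^ p := Real.rpow_pos_of_pos (hLampos (n + j) (by omega)) p
    field_simp
  have hsumshift : Summable (fun j : ℕ => f (j + m0)) := (summable_nat_add_iff m0).mpr hsum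
  have hLnp : (0:ℝ) < Lam n ^ p := Real.rpow_pos_of_pos (hLampos n hn) p
  have hkey : (fun j : ℕ => b (n + j) / Lam (n + j) ^ p) =
      fun j => (Lam n ^ p)⁻¹ * f (j + m0) := by
    funext j
    rw [hfshift j]
    field_simp
  constructor
  · rw [hkey]
    exact hsumshift.mul_left _
  · rw [hkey, tsum_mul_left]
    -- total tsum of f bound
    have htail : (∑' j : ℕ, f (j + m0)) ≤ ∑' m : ℕ, f m := by
      have h := Summable.sum_add_tsum_nat_add (f := f) m0 hsum
      have hfin : 0 ≤ ∑ i ∈ Finset.range m0, f i :=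
        Finset.sum_nonneg fun i _ => hf0 i
      linarith
    -- compute RHS tsum
    have hrhs : (∑' m : ℕ, b (m + 1) * x (m + 1) ^ p) = ∑ k ∈ Finset.Icc 1 n, b k := by
      rw [tsum_eq_sum (s := Finset.range n)]
      · rw [show Finset.Icc 1 n = Finset.Ico 1 (n + 1) by rw [Finset.Ico_add_one_right_eq_Icc],
          Finset.sum_Ico_eq_sum_range]
        simp only [Nat.add_sub_cancel]
        apply Finset.sum_congr rfl
        intro m hm
        simp only [Finset.mem_range] at hm
        have h1 : m + 1 ≤ n := by omega
        simp [x, h1, Real.one_rpow, add_comm]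
      · intro m hm
        simp only [Finset.mem_range, not_lt] at hm
        have h1 : ¬ (m + 1 ≤ n) := by omega
        simp [x, h1, Real.zero_rpow (ne_of_gt hppos)]
    have h1 : (∑' j : ℕ, f (j + m0)) ≤ U * ∑ k ∈ Finset.Icc 1 n, b k := by
      calc (∑' j : ℕ, f (j + m0)) ≤ ∑' m : ℕ, f m := htail
        _ ≤ U * ∑' m : ℕ, b (m + 1) * x (m + 1) ^ p := hle
        _ = U * ∑ k ∈ Finset.Icc 1 n, b k := by rw [hrhs]
    calc (Lam n ^ p)⁻¹ * ∑' j : ℕ, f (j + m0)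
        ≤ (Lam n ^ p)⁻¹ * (U * ∑ k ∈ Finset.Icc 1 n, b k) :=
          mul_le_mul_of_nonneg_left h1 (by positivity)
      _ = U / Lam n ^ p * ∑ k ∈ Finset.Icc 1 n, b k := by ring
end

section
/- Let $p \geq 1$, let $(b_n)$ be non-negative, let $(\lambda_n)$ be non-negative and non-increasing with $\lambda_1 > 0$, and set $\Lambda_n = \sum_{k=1}^n \lambda_k$. Suppose there is $U'_p > 0$ such that $\sum_{k=n}^\infty b_k/\Lambda_k^p \leq (U'_p/\Lambda_n^p) \sum_{k=1}^n b_k$ for all $n \geq 1$. Then with $C_{i,p,\lambda} = \Lambda_i^p / \sum_{j=1}^i \lambda_j \Lambda_j^{p-1}$ if $1 \leq p \leq 2$ and $C_{i,p,\lambda} = p$ if $p > 2$, one has for every $n \geq 1$: $\sum_{k=1}^n \lambda_k \Lambda_k^{p-1} \sum_{i=k}^{\infty} C_{i,p,\lambda} \frac{b_i}{\Lambda_i^p} \leq U''_p \sum_{i=1}^n b_i$, where $U''_p = pU'_p + 1$ for $1 \leq p \leq 2$ and $U''_p = pU'_p + p$ for $p > 2$. -/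
/-- For `0 ≤ a ≤ b` and `1 ≤ p`, `(b-a) * b^(p-1) ≤ b^p - a^p`. -/
lemma key_aux_upper {a b p : ℝ} (ha : 0 ≤ a) (hab : a ≤ b) (hp : 1 ≤ p) :
    (b - a) * b ^ (p - 1) ≤ b ^ p - a ^ p := by
  rcases eq_or_lt_of_le (ha.trans hab) with hb | hb
  · have ha0 : a = 0 := le_antisymm (hab.trans hb.ge) ha
    simp [← hb, ha0]
  · have hbp : b ^ p = b ^ (p - 1) * b := by
      rw [← Real.rpow_add_one hb.ne' (p - 1)]; ring_nf
    have hap : a ^ p ≤ a * b ^ (p - 1) := by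
      rcases eq_or_lt_of_le ha with ha0 | ha0
      · rw [← ha0, Real.zero_rpow (by linarith : p ≠ 0)]; positivity
      · have : a ^ p = a ^ (p - 1) * a := by
          rw [← Real.rpow_add_one ha0.ne' (p - 1)]; ring_nf
        rw [this, mul_comm]
        exact mul_le_mul_of_nonneg_left
          (Real.rpow_le_rpow ha hab (by linarith)) ha
    nlinarith [Real.rpow_nonneg (ha.trans hab) (p - 1)]

/-- For `0 ≤ a ≤ b` and `1 ≤ p`, `b^p - a^p ≤ p * ((b-a) * b^(p-1))`. -/
lemma key_aux_lower {a b p : ℝ} (ha : 0 ≤ a) (hab : a ≤ b) (hp : 1 ≤ p) :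
    b ^ p - a ^ p ≤ p * ((b - a) * b ^ (p - 1)) := by
  rcases eq_or_lt_of_le (ha.trans hab) with hb | hb
  · have ha0 : a = 0 := le_antisymm (hab.trans hb.ge) ha
    have : (0:ℝ) ^ p = 0 := Real.zero_rpow (by linarith)
    simp [← hb, ha0, this]
  · have hs : (-1 : ℝ) ≤ a / b - 1 := by
      have : 0 ≤ a / b := div_nonneg ha hb.le
      linarith
    have hber := one_add_mul_self_le_rpow_one_add hs hp
    rw [add_sub_cancel] at hber
    have hdiv : (a / b) ^ p = a ^ p / b ^ p := Real.div_rpow ha hb.le p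
    rw [hdiv] at hber
    have hbp : 0 < b ^ p := Real.rpow_pos_of_pos hb p
    have hbp1 : b ^ p = b ^ (p - 1) * b := by
      rw [← Real.rpow_add_one hb.ne' (p - 1)]; ring_nf
    have hber2 : (1 + p * (a / b - 1)) * b ^ p ≤ a ^ p := by
      calc (1 + p * (a / b - 1)) * b ^ p ≤ (a ^ p / b ^ p) * b ^ p :=
            mul_le_mul_of_nonneg_right hber hbp.le
        _ = a ^ p := by field_simp
    have hx : (a / b) * b ^ p = a * b ^ (p - 1) := by
      rw [hbp1]; field_simp
    nlinarith [hx]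

/-- The key estimate (3.1) in the proof of the main theorem. -/
theorem key_estimate (p : ℝ) (hp : 1 ≤ p) (b lam : ℕ → ℝ)
    (hb : ∀ n, 0 ≤ b n) (hlam0 : ∀ n, 0 ≤ lam n)
    (hlammono : ∀ n, lam (n + 1) ≤ lam n) (hlam1 : 0 < lam 1)
    (Lam : ℕ → ℝ) (hLam : ∀ n, Lam n = ∑ k ∈ Finset.Icc 1 n, lam k)
    (C : ℕ → ℝ)
    (hC : ∀ i, 1 ≤ i → C i =
      if p ≤ 2 then Lam i ^ p / ∑ j ∈ Finset.Icc 1 i, lam j * Lam j ^ (p - 1) else p)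
    (U' : ℝ) (hU' : 0 < U')
    (hsum : Summable (fun k : ℕ => b (k + 1) / Lam (k + 1) ^ p))
    (hcond : ∀ n, 1 ≤ n →
      (∑' j : ℕ, b (n + j) / Lam (n + j) ^ p) ≤
        U' / Lam n ^ p * ∑ k ∈ Finset.Icc 1 n, b k)
    (U'' : ℝ) (hU'' : U'' = if p ≤ 2 then p * U' + 1 else p * U' + p) :
    ∀ n, 1 ≤ n →
      ∑ k ∈ Finset.Icc 1 n, lam k * Lam k ^ (p - 1) *
          (∑' j : ℕ, C (k + j) * (b (k + j) / Lam (k + j) ^ p)) ≤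
        U'' * ∑ i ∈ Finset.Icc 1 n, b i := by
  intro n hn
  have hppos : (0:ℝ) < p := lt_of_lt_of_le one_pos hp
  set S : ℕ → ℝ := fun m => ∑ j ∈ Finset.Icc 1 m, lam j * Lam j ^ (p - 1) with hSdef
  set f : ℕ → ℝ := fun i => C i * (b i / Lam i ^ p) with hfdef
  set h : ℕ → ℝ := fun i => b i / Lam i ^ p with hhdef
  have hLnonneg : ∀ m, 0 ≤ Lam m := fun m => by
    rw [hLam]; exact Finset.sum_nonneg fun j _ => hlam0 j
  have hLmono : ∀ m₁ m₂, m₁ ≤ m₂ → Lam m₁ ≤ Lam m₂ := by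
    intro m₁ m₂ hm
    rw [hLam, hLam]
    exact Finset.sum_le_sum_of_subset_of_nonneg
      (Finset.Icc_subset_Icc_right hm) (fun j _ _ => hlam0 j)
  have hL1 : Lam 1 = lam 1 := by rw [hLam]; simp
  have hLpos : ∀ m, 1 ≤ m → 0 < Lam m := by
    intro m hm
    have := hLmono 1 m hm
    linarith [hL1 ▸ this]
  have hL0 : Lam 0 = 0 := by rw [hLam]; simp
  have hLsucc : ∀ m, Lam (m+1) = Lam m + lam (m+1) := by
    intro m
    rw [hLam, hLam, Finset.sum_Icc_succ_top (by omega : 1 ≤ m + 1)]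
  have hSnonneg : ∀ m, 0 ≤ S m := fun m => Finset.sum_nonneg fun j _ =>
    mul_nonneg (hlam0 j) (Real.rpow_nonneg (hLnonneg j) _)
  have hSpos : ∀ m, 1 ≤ m → 0 < S m := by
    intro m hm
    have h1 : 0 < lam 1 * Lam 1 ^ (p-1) := by
      have := hLpos 1 le_rfl
      positivity
    exact lt_of_lt_of_le h1 <| Finset.single_le_sum
      (f := fun j => lam j * Lam j ^ (p-1))
      (fun j _ => mul_nonneg (hlam0 j) (Real.rpow_nonneg (hLnonneg j) _))
      (Finset.mem_Icc.2 ⟨le_rfl, hm⟩)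
  have hSbound : ∀ m, S m ≤ Lam m ^ p ∧ Lam m ^ p ≤ p * S m := by
    intro m
    induction m with
    | zero =>
      have hz : (Lam 0) ^ p = 0 := by rw [hL0]; exact Real.zero_rpow hppos.ne'
      have hS0 : S 0 = 0 := by simp [hSdef]
      constructor <;> simp [hz, hS0]
    | succ m ih =>
      have hab : Lam m ≤ Lam (m+1) := by rw [hLsucc]; linarith [hlam0 (m+1)]
      have hba : Lam (m+1) - Lam m = lam (m+1) := by rw [hLsucc]; ring
      have hup := key_aux_upper (hLnonneg m) hab hp
      have hlo := key_aux_lower (hLnonneg m) hab hp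
      rw [hba] at hup hlo
      have hSsucc : S (m+1) = S m + lam (m+1) * Lam (m+1) ^ (p-1) :=
        Finset.sum_Icc_succ_top (by omega) _
      constructor
      · rw [hSsucc]; linarith [ih.1]
      · rw [hSsucc]; nlinarith [ih.2]
  have hLppos : ∀ m, 1 ≤ m → 0 < Lam m ^ p := fun m hm =>
    Real.rpow_pos_of_pos (hLpos m hm) p
  set cc : ℝ := if p ≤ 2 then 1 else p with hcc
  have hCnn : ∀ i, 1 ≤ i → 0 ≤ C i := by
    intro i hi
    rw [hC i hi]
    split_ifs
    · exact div_nonneg (Real.rpow_nonneg (hLnonneg i) p) (hSnonneg i)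
    · linarith
  have hCle : ∀ i, 1 ≤ i → C i ≤ p := by
    intro i hi
    rw [hC i hi]
    split_ifs
    · rw [div_le_iff₀ (hSpos i hi)]
      exact (hSbound i).2
    · exact le_rfl
  have hCS : ∀ i, 1 ≤ i → C i * S i ≤ cc * Lam i ^ p := by
    intro i hi
    rw [hC i hi, hcc]
    split_ifs
    · rw [div_mul_cancel₀ _ (hSpos i hi).ne', one_mul]
    · exact mul_le_mul_of_nonneg_left (hSbound i).1 hppos.le
  have hhnn : ∀ i, 0 ≤ h i := fun i =>
    div_nonneg (hb i) (Real.rpow_nonneg (hLnonneg i) p)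
  have hfnn : ∀ i, 1 ≤ i → 0 ≤ f i := fun i hi =>
    mul_nonneg (hCnn i hi) (hhnn i)
  have hfle : ∀ i, 1 ≤ i → f i ≤ p * h i := fun i hi =>
    mul_le_mul_of_nonneg_right (hCle i hi) (hhnn i)
  have hsumh : ∀ k, 1 ≤ k → Summable (fun j => h (k + j)) := by
    intro k hk
    obtain ⟨m, rfl⟩ : ∃ m, k = 1 + m := ⟨k - 1, by omega⟩
    have := (summable_nat_add_iff (f := fun t => b (t + 1) / Lam (t + 1) ^ p) m).2 hsum
    exact this.congr fun j => by
      simp only [hhdef]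
      rw [show j + m + 1 = 1 + m + j by omega]
  have hsumf : ∀ k, 1 ≤ k → Summable (fun j => f (k + j)) := by
    intro k hk
    exact Summable.of_nonneg_of_le (fun j => hfnn (k + j) (by omega))
      (fun j => hfle (k + j) (by omega)) ((hsumh k hk).mul_left p)
  set T : ℝ := ∑' j, f (n + 1 + j) with hT
  have hsplit : ∀ k, 1 ≤ k → k ≤ n →
      (∑' j, f (k + j)) = (∑ i ∈ Finset.Icc k n, f i) + T := by
    intro k hk hkn
    have e1 := (Summable.sum_add_tsum_nat_add (f := fun j => f (k + j)) (n + 1 - k)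
      (hsumf k hk)).symm
    rw [e1]
    congr 1
    · rw [← Finset.Ico_add_one_right_eq_Icc, Finset.sum_Ico_eq_sum_range]
    · rw [hT]
      exact tsum_congr fun j => by congr 1; omega
  have hTnn : 0 ≤ T := tsum_nonneg fun j => hfnn (n + 1 + j) (by omega)
  have hBnn : (0:ℝ) ≤ ∑ i ∈ Finset.Icc 1 n, b i :=
    Finset.sum_nonneg fun i _ => hb i
  -- bound on the tail T
  have hTle : T ≤ p * (U' / Lam n ^ p * ∑ k ∈ Finset.Icc 1 n, b k) := by
    have h1 : T ≤ ∑' j, p * h (n + 1 + j) := by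
      refine Summable.tsum_le_tsum (fun j => hfle (n + 1 + j) (by omega)) ?_ ?_
      · have := hsumf (n + 1) (by omega)
        exact this.congr fun j => by rw [show n + 1 + j = n + 1 + j from rfl]
      · exact ((hsumh (n + 1) (by omega)).mul_left p)
    have h2 : (∑' j, p * h (n + 1 + j)) = p * ∑' j, h (n + 1 + j) := tsum_mul_left
    have h3 : (∑' j, h (n + 1 + j)) ≤ ∑' j, h (n + j) := by
      have e := Summable.tsum_eq_zero_add (hsumh n hn)
      have e2 : (∑' j, h (n + (j + 1))) = ∑' j, h (n + 1 + j) :=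
        tsum_congr fun j => by congr 1; omega
      rw [e2] at e
      have := hhnn n
      simp only [add_zero] at e
      linarith [e]
    have h4 := hcond n hn
    calc T ≤ ∑' j, p * h (n + 1 + j) := h1
      _ = p * ∑' j, h (n + 1 + j) := h2
      _ ≤ p * ∑' j, h (n + j) := by
          exact mul_le_mul_of_nonneg_left h3 hppos.le
      _ ≤ p * (U' / Lam n ^ p * ∑ k ∈ Finset.Icc 1 n, b k) := by
          exact mul_le_mul_of_nonneg_left h4 hppos.le
  -- now rewrite LHS
  have hLHS : (∑ k ∈ Finset.Icc 1 n, lam k * Lam k ^ (p - 1) *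
          (∑' j : ℕ, C (k + j) * (b (k + j) / Lam (k + j) ^ p)))
      = (∑ i ∈ Finset.Icc 1 n, S i * f i) + S n * T := by
    have step1 : ∀ k ∈ Finset.Icc 1 n,
        lam k * Lam k ^ (p - 1) * (∑' j : ℕ, C (k + j) * (b (k + j) / Lam (k + j) ^ p))
        = (∑ i ∈ Finset.Icc k n, lam k * Lam k ^ (p - 1) * f i)
          + lam k * Lam k ^ (p - 1) * T := by
      intro k hk
      rw [Finset.mem_Icc] at hk
      have : (∑' j : ℕ, C (k + j) * (b (k + j) / Lam (k + j) ^ p)) = ∑' j, f (k + j) := rfl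
      rw [this, hsplit k hk.1 hk.2, mul_add, Finset.mul_sum]
    rw [Finset.sum_congr rfl step1, Finset.sum_add_distrib, ← Finset.sum_mul]
    congr 1
    rw [Finset.sum_comm' (s' := fun i => Finset.Icc 1 i) (t' := Finset.Icc 1 n)
      (by intro x y; simp only [Finset.mem_Icc]; omega)]
    refine Finset.sum_congr rfl fun i _ => ?_
    rw [← Finset.sum_mul]
  rw [hLHS]
  have part1 : (∑ i ∈ Finset.Icc 1 n, S i * f i) ≤ cc * ∑ i ∈ Finset.Icc 1 n, b i := by
    rw [Finset.mul_sum]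
    refine Finset.sum_le_sum fun i hi => ?_
    rw [Finset.mem_Icc] at hi
    have hi1 := hi.1
    have key : S i * f i = (C i * S i) * h i := by rw [hfdef]; ring
    rw [key]
    calc (C i * S i) * h i ≤ (cc * Lam i ^ p) * h i :=
          mul_le_mul_of_nonneg_right (hCS i hi1) (hhnn i)
      _ = cc * b i := by
          rw [hhdef]
          have hne : Lam i ^ p ≠ 0 := (hLppos i hi1).ne'
          field_simp
  have part2 : S n * T ≤ p * U' * ∑ i ∈ Finset.Icc 1 n, b i := by
    calc S n * T ≤ Lam n ^ p * T :=
          mul_le_mul_of_nonneg_right (hSbound n).1 hTnn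
      _ ≤ Lam n ^ p * (p * (U' / Lam n ^ p * ∑ k ∈ Finset.Icc 1 n, b k)) :=
          mul_le_mul_of_nonneg_left hTle (Real.rpow_nonneg (hLnonneg n) p)
      _ = p * U' * ∑ i ∈ Finset.Icc 1 n, b i := by
          have := (hLppos n hn).ne'
          field_simp
  have hU''eq : U'' = p * U' + cc := by
    rw [hU'', hcc]; split_ifs <;> ring
  calc (∑ i ∈ Finset.Icc 1 n, S i * f i) + S n * T
      ≤ cc * (∑ i ∈ Finset.Icc 1 n, b i) + p * U' * ∑ i ∈ Finset.Icc 1 n, b i :=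
        add_le_add part1 part2
    _ = U'' * ∑ i ∈ Finset.Icc 1 n, b i := by rw [hU''eq]; ring
end

section
/- Let $p = 2$ and $n \geq 1$. Then for every non-negative sequence $(a_k)_{1 \leq k \leq n}$ (not necessarily non-increasing), $\left(\sum_{k=1}^n a_k\right)^2 \leq \frac{2n}{n+1} \sum_{k=1}^n a_k \sum_{i=1}^k a_i$. -/
lemma double_sum_id (a : ℕ → ℝ) (n : ℕ) :
    2 * ∑ k ∈ Finset.Icc 1 n, a k * ∑ i ∈ Finset.Icc 1 k, a i =
      (∑ k ∈ Finset.Icc 1 n, a k) ^ 2 + ∑ k ∈ Finset.Icc 1 n, (a k) ^ 2 := by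
  induction n with
  | zero => simp
  | succ m ih =>
    rw [Finset.sum_Icc_succ_top (by omega : 1 ≤ m + 1),
        Finset.sum_Icc_succ_top (by omega : 1 ≤ m + 1),
        Finset.sum_Icc_succ_top (by omega : 1 ≤ m + 1)]
    ring_nf
    ring_nf at ih
    linarith

/-- For `p = 2` and constant weights, the refined power rule holds for all
non-negative sequences: `(∑_{k=1}^n a_k)^2 ≤ (2n/(n+1)) ∑_k a_k ∑_{i≤k} a_i`. -/
theorem refined_power_rule_p_two (n : ℕ) (hn : 1 ≤ n) (a : ℕ → ℝ)
    (ha : ∀ k, 0 ≤ a k) :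
    (∑ k ∈ Finset.Icc 1 n, a k) ^ 2 ≤
      2 * n / (n + 1) * ∑ k ∈ Finset.Icc 1 n, a k * ∑ i ∈ Finset.Icc 1 k, a i := by
  have hcs : (∑ k ∈ Finset.Icc 1 n, a k) ^ 2 ≤
      (n : ℝ) * ∑ k ∈ Finset.Icc 1 n, (a k) ^ 2 := by
    have := sq_sum_le_card_mul_sum_sq (s := Finset.Icc 1 n) (f := a)
    simpa [Nat.card_Icc] using this
  have hid := double_sum_id a n
  have hn' : (0:ℝ) < n := by exact_mod_cast hn
  rw [div_mul_eq_mul_div, le_div_iff₀ (by linarith)]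
  nlinarith [sq_nonneg (∑ k ∈ Finset.Icc 1 n, a k)]
end

section
/- Let $1 < p \leq 2$ and $n \geq 2$. Define $f_n(x_1,\ldots,x_n) = \left(\sum_{k=1}^n x_k\right)^p - \frac{n^p}{\sum_{i=1}^n i^{p-1}} \sum_{k=1}^n x_k \left(\sum_{i=1}^k x_i\right)^{p-1}$ on non-negative, non-increasing tuples. Then $f_n(x) = 0$ with $x_1 \geq \cdots \geq x_n \geq 0$ and $x_1 > 0$ if and only if $x_1 = x_2 = \cdots = x_n$. -/
/-!
Let `q = p - 1`, `S = x₁ + ⋯ + xₙ` and `c = S / n`. Move along the segment `dₜ = c + t (x - c)`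
from the constant tuple to `x`. Its prefix sums are `Zₜ,ₖ = k c + t Vₖ`, where `Vₖ ≥ 0` is the
`k`-th prefix sum of `x - c` (prefix averages of a non-increasing tuple dominate its mean).
Summation by parts and the tangent bound `Z_{k+1}^q - Z_k^q ≤ q Z_k^{q-1} d_{k+1}` for the concave
power show that the derivative of `G t = ∑ₖ dₜ,ₖ Zₜ,ₖ^q` is at least
`q ∑ₖ Vₖ Zₖ^{q-1} (dₖ - d_{k+1})`, which is positive for `t > 0` as soon as `x` drops somewhere.
Hence `c^p ∑ k^q = G 0 < G 1 = ∑ xₖ Zₖ^q` unless `x` is constant, and `f_n(x) < 0` then.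
-/

open Finset

noncomputable section

def prefixSum (x : ℕ → ℝ) (k : ℕ) : ℝ := ∑ i ∈ Icc 1 k, x i

def prefixPowerSum (q : ℝ) (n : ℕ) (x : ℕ → ℝ) : ℝ := ∑ k ∈ Icc 1 n, x k * prefixSum x k ^ q

end

@[simp] lemma prefixSum_zero (x : ℕ → ℝ) : prefixSum x 0 = 0 := by simp [prefixSum]

lemma prefixSum_succ (x : ℕ → ℝ) (k : ℕ) : prefixSum x (k + 1) = prefixSum x k + x (k + 1) :=
  sum_Icc_succ_top (Nat.le_add_left 1 k) x

lemma prefixSum_add_mul (a w : ℕ → ℝ) (t : ℝ) (k : ℕ) :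
    prefixSum (fun i ↦ a i + t * w i) k = prefixSum a k + t * prefixSum w k := by
  simp [prefixSum, sum_add_distrib, mul_sum]

lemma prefixSum_const (c : ℝ) (k : ℕ) : prefixSum (fun _ ↦ c) k = k * c := by
  simp [prefixSum]

lemma prefixSum_sub_const (x : ℕ → ℝ) (c : ℝ) (k : ℕ) :
    prefixSum (fun i ↦ x i - c) k = prefixSum x k - k * c := by
  simp [prefixSum, sum_sub_distrib]

lemma prefixSum_congr {x y : ℕ → ℝ} {k : ℕ} (h : ∀ i ∈ Icc 1 k, x i = y i) :
    prefixSum x k = prefixSum y k :=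
  sum_congr rfl h

lemma prefixSum_add_sum_Ioc (x : ℕ → ℝ) {m n : ℕ} (hmn : m ≤ n) :
    prefixSum x m + ∑ i ∈ Ioc m n, x i = prefixSum x n := by
  simp only [prefixSum, show ∀ k, Icc 1 k = Ioc 0 k from Icc_add_one_left_eq_Ioc 0]
  exact sum_Ioc_consecutive x (Nat.zero_le m) hmn

lemma prefixPowerSum_congr {q : ℝ} {n : ℕ} {x y : ℕ → ℝ} (h : ∀ k ∈ Icc 1 n, x k = y k) :
    prefixPowerSum q n x = prefixPowerSum q n y := by
  refine sum_congr rfl fun k hk ↦ ?_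
  rw [h k hk, prefixSum_congr fun i hi ↦ h i (Icc_subset_Icc_right (mem_Icc.1 hk).2 hi)]

lemma prefixPowerSum_const {q : ℝ} (hq : q + 1 ≠ 0) (n : ℕ) {c : ℝ} (hc : 0 ≤ c) :
    prefixPowerSum q n (fun _ ↦ c) = c ^ (q + 1) * ∑ k ∈ Icc 1 n, (k : ℝ) ^ q := by
  rw [prefixPowerSum, mul_sum]
  refine sum_congr rfl fun k _ ↦ ?_
  rw [prefixSum_const, Real.mul_rpow k.cast_nonneg hc, Real.rpow_add_one' hc hq]
  ring

lemma sum_Icc_add_eq_sum_range_add {M : Type*} [AddCommMonoid M] (f : ℕ → M) (n : ℕ) :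
    ∑ k ∈ Icc 1 n, f k + f 0 = ∑ k ∈ range n, f k + f n := by
  induction n with
  | zero => simp
  | succ n ih => rw [sum_Icc_succ_top (Nat.le_add_left 1 n), add_right_comm, ih, sum_range_succ]

lemma sum_Icc_mul_eq_prefixSum_mul_sub (w ψ : ℕ → ℝ) (n : ℕ) :
    ∑ k ∈ Icc 1 n, w k * ψ k =
      prefixSum w n * ψ n - ∑ k ∈ range n, prefixSum w k * (ψ (k + 1) - ψ k) := by
  induction n with
  | zero => simp
  | succ n ih =>
    rw [sum_Icc_succ_top (Nat.le_add_left 1 n), ih, sum_range_succ, prefixSum_succ]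
    ring

lemma rpow_sub_rpow_le_mul_sub {q a b : ℝ} (hq0 : 0 ≤ q) (hq1 : q ≤ 1) (ha : 0 < a)
    (hb : 0 ≤ b) : b ^ q - a ^ q ≤ q * a ^ (q - 1) * (b - a) := by
  have h := rpow_one_add_le_one_add_mul_self (s := b / a - 1)
    (by linarith [div_nonneg hb ha.le]) hq0 hq1
  rw [add_sub_cancel, Real.div_rpow hb ha.le, div_le_iff₀ (by positivity)] at h
  have : a ^ q * (q * (b / a - 1)) = q * (a ^ q / a) * (b - a) := by field_simp
  rw [Real.rpow_sub_one ha.ne']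
  linarith

section Antitone

variable {x : ℕ → ℝ} {n : ℕ}

lemma mul_mul_sub_le_mul_prefixSum_sub (hx : AntitoneOn x (Set.Icc 1 n)) {m : ℕ} (hmn : m ≤ n) :
    m * (n - m) * (x m - x (m + 1)) ≤ n * prefixSum x m - m * prefixSum x n := by
  have head : m * x m ≤ prefixSum x m := by
    simpa [prefixSum] using card_nsmul_le_sum (Icc 1 m) x (x m) fun i hi ↦ by
      obtain ⟨hi1, him⟩ := mem_Icc.1 hi
      exact hx ⟨hi1, him.trans hmn⟩ ⟨hi1.trans him, hmn⟩ him
  have tail : ∑ i ∈ Ioc m n, x i ≤ (n - m) * x (m + 1) := by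
    have := sum_le_card_nsmul (Ioc m n) x (x (m + 1)) fun i hi ↦ by
      obtain ⟨hmi, hin⟩ := mem_Ioc.1 hi
      exact hx ⟨Nat.le_add_left 1 m, hmi.trans_le hin⟩ ⟨Nat.one_le_of_lt hmi, hin⟩ hmi
    simpa [Nat.cast_sub hmn] using this
  rw [← prefixSum_add_sum_Ioc x hmn]
  have hm : (0 : ℝ) ≤ m := m.cast_nonneg
  have hnm : (0 : ℝ) ≤ n - m := sub_nonneg.2 (Nat.cast_le.2 hmn)
  nlinarith [mul_le_mul_of_nonneg_left head hnm, mul_le_mul_of_nonneg_left tail hm]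

lemma mul_prefixSum_le (hx : AntitoneOn x (Set.Icc 1 n)) {m : ℕ} (hmn : m ≤ n) :
    m * prefixSum x n ≤ n * prefixSum x m := by
  have h := mul_mul_sub_le_mul_prefixSum_sub hx hmn
  rcases Nat.eq_zero_or_pos m with rfl | hm
  · simp
  rcases hmn.eq_or_lt with rfl | hmn
  · rw [mul_comm]
  have : x (m + 1) ≤ x m := hx ⟨hm, hmn.le⟩ ⟨Nat.le_add_left 1 m, hmn⟩ (Nat.le_succ m)
  nlinarith [mul_nonneg (mul_nonneg m.cast_nonneg (sub_nonneg.2 (Nat.cast_le.2 hmn.le)))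
    (sub_nonneg.2 this)]

lemma mul_prefixSum_lt (hx : AntitoneOn x (Set.Icc 1 n)) {m : ℕ} (hm : 1 ≤ m) (hmn : m < n)
    (hdrop : x (m + 1) < x m) : m * prefixSum x n < n * prefixSum x m := by
  have h := mul_mul_sub_le_mul_prefixSum_sub hx hmn.le
  have : (0 : ℝ) < m * (n - m) * (x m - x (m + 1)) := by
    have : (m : ℝ) < n := Nat.cast_lt.2 hmn
    have : (0 : ℝ) < m := Nat.cast_pos.2 hm
    have := sub_pos.2 hdrop
    positivity
  linarith

end Antitone

lemma hasDerivAt_prefixPowerSum_line (q : ℝ) (n : ℕ) (a w : ℕ → ℝ) {t : ℝ}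
    (h : ∀ k ∈ Icc 1 n, prefixSum (fun i ↦ a i + t * w i) k ≠ 0) :
    HasDerivAt (fun s ↦ prefixPowerSum q n fun i ↦ a i + s * w i)
      (∑ k ∈ Icc 1 n, (w k * prefixSum (fun i ↦ a i + t * w i) k ^ q +
        (a k + t * w k) * (q * prefixSum (fun i ↦ a i + t * w i) k ^ (q - 1) * prefixSum w k)))
      t := by
  simp only [prefixPowerSum, prefixSum_add_mul] at h ⊢
  refine HasDerivAt.fun_sum fun k hk ↦ ?_
  have hline : ∀ b v : ℝ, HasDerivAt (fun s ↦ b + s * v) v t := fun b v ↦ by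
    simpa using ((hasDerivAt_id t).mul_const v).const_add b
  exact (hline _ _).mul (((hline _ _).rpow_const (Or.inl (h k hk))).congr_deriv (by ring))

/-- The derivative in `hasDerivAt_prefixPowerSum_line` is bounded below by summation by parts
and the tangent-line bound for the concave `t ↦ t ^ q`. -/
lemma mul_sum_le_of_prefixSum_nonneg {q : ℝ} (hq0 : 0 ≤ q) (hq1 : q ≤ 1) {n : ℕ} {d w : ℕ → ℝ}
    (hZ : ∀ k ∈ Icc 1 n, 0 < prefixSum d k) (hW : ∀ k ∈ range n, 0 ≤ prefixSum w k)
    (hWn : prefixSum w n = 0) :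
    q * ∑ k ∈ range n, prefixSum w k * prefixSum d k ^ (q - 1) * (d k - d (k + 1)) ≤
      ∑ k ∈ Icc 1 n,
        (w k * prefixSum d k ^ q + d k * (q * prefixSum d k ^ (q - 1) * prefixSum w k)) := by
  set Z := prefixSum d
  set W := prefixSum w with hW_def
  have abel : ∑ k ∈ Icc 1 n, w k * Z k ^ q = -∑ k ∈ range n, W k * (Z (k + 1) ^ q - Z k ^ q) := by
    rw [sum_Icc_mul_eq_prefixSum_mul_sub, ← hW_def, hWn]
    ring
  have shift : ∑ k ∈ Icc 1 n, d k * (q * Z k ^ (q - 1) * W k) =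
      ∑ k ∈ range n, d k * (q * Z k ^ (q - 1) * W k) := by
    simpa [W, hWn] using sum_Icc_add_eq_sum_range_add (fun k ↦ d k * (q * Z k ^ (q - 1) * W k)) n
  have tangent : ∀ k ∈ range n,
      W k * (Z (k + 1) ^ q - Z k ^ q) ≤ W k * (q * Z k ^ (q - 1) * d (k + 1)) := by
    intro k hk
    obtain rfl | hk0 := Nat.eq_zero_or_pos k
    · simp [W]
    have hkn := mem_range.1 hk
    refine mul_le_mul_of_nonneg_left ?_ (hW k hk)
    simpa [Z, prefixSum_succ] using rpow_sub_rpow_le_mul_sub hq0 hq1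
      (hZ k (mem_Icc.2 ⟨hk0, hkn.le⟩)) (hZ (k + 1) (mem_Icc.2 ⟨by omega, hkn⟩)).le
  calc q * ∑ k ∈ range n, W k * Z k ^ (q - 1) * (d k - d (k + 1))
      = ∑ k ∈ range n, d k * (q * Z k ^ (q - 1) * W k) -
          ∑ k ∈ range n, W k * (q * Z k ^ (q - 1) * d (k + 1)) := by
        rw [mul_sum, ← sum_sub_distrib]
        exact sum_congr rfl fun _ _ ↦ by ring
    _ ≤ ∑ k ∈ range n, d k * (q * Z k ^ (q - 1) * W k) -
          ∑ k ∈ range n, W k * (Z (k + 1) ^ q - Z k ^ q) :=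
        sub_le_sub_left (sum_le_sum tangent) _
    _ = _ := by rw [sum_add_distrib, abel, shift]; ring

lemma sum_prefixSum_mul_rpow_mul_sub_pos (q : ℝ) {n : ℕ} {d w : ℕ → ℝ}
    (hd : AntitoneOn d (Set.Icc 1 n)) (hZ : ∀ k ∈ Icc 1 n, 0 < prefixSum d k)
    (hW : ∀ k ∈ range n, 0 ≤ prefixSum w k) {m : ℕ} (hm : 1 ≤ m) (hmn : m < n)
    (hWm : 0 < prefixSum w m) (hdrop : d (m + 1) < d m) :
    0 < ∑ k ∈ range n, prefixSum w k * prefixSum d k ^ (q - 1) * (d k - d (k + 1)) := by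
  refine sum_pos' (fun k hk ↦ ?_) ⟨m, mem_range.2 hmn, ?_⟩
  · obtain rfl | hk0 := Nat.eq_zero_or_pos k
    · simp
    have hkn := mem_range.1 hk
    exact mul_nonneg (mul_nonneg (hW k hk)
      (Real.rpow_nonneg (hZ k (mem_Icc.2 ⟨hk0, hkn.le⟩)).le _))
      (sub_nonneg.2 (hd ⟨hk0, hkn.le⟩ ⟨Nat.le_add_left 1 k, hkn⟩ (Nat.le_succ k)))
  · have := hZ m (mem_Icc.2 ⟨hm, hmn.le⟩)
    have := sub_pos.2 hdrop
    positivity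

theorem prefixPowerSum_avg_lt {q : ℝ} (hq0 : 0 < q) (hq1 : q ≤ 1) {n : ℕ} {x : ℕ → ℝ}
    (hx0 : ∀ k ∈ Icc 1 n, 0 ≤ x k) (hx : AntitoneOn x (Set.Icc 1 n)) {m : ℕ} (hm : 1 ≤ m)
    (hmn : m < n) (hdrop : x (m + 1) < x m) :
    prefixPowerSum q n (fun _ ↦ prefixSum x n / n) < prefixPowerSum q n x := by
  set c := prefixSum x n / n
  set w : ℕ → ℝ := fun i ↦ x i - c
  set G : ℝ → ℝ := fun t ↦ prefixPowerSum q n fun i ↦ c + t * w i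
  have hn : (0 : ℝ) < n := Nat.cast_pos.2 (by omega)
  have hc : 0 < c := by
    refine div_pos ((hx0 (m + 1) (mem_Icc.2 ⟨by omega, hmn⟩)).trans_lt (hdrop.trans_le ?_)) hn
    exact single_le_sum (fun k hk ↦ hx0 k hk) (mem_Icc.2 ⟨hm, hmn.le⟩)
  have hW : ∀ k, prefixSum w k = (n * prefixSum x k - k * prefixSum x n) / n := fun k ↦ by
    simp only [w, prefixSum_sub_const, c]
    field_simp
  have hW0 : ∀ k ≤ n, 0 ≤ prefixSum w k := fun k hk ↦ by
    rw [hW]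
    exact div_nonneg (sub_nonneg.2 (mul_prefixSum_le hx hk)) hn.le
  have hWm : 0 < prefixSum w m := by
    rw [hW]
    exact div_pos (sub_pos.2 (mul_prefixSum_lt hx hm hmn hdrop)) hn
  have hZ : ∀ t, 0 ≤ t → ∀ k ∈ Icc 1 n, 0 < prefixSum (fun i ↦ c + t * w i) k := by
    intro t ht k hk
    rw [prefixSum_add_mul, prefixSum_const]
    have : (0 : ℝ) < k := Nat.cast_pos.2 (mem_Icc.1 hk).1
    have := hW0 k (mem_Icc.1 hk).2
    positivity
  have hderiv : ∀ t, 0 ≤ t → HasDerivAt G _ t := fun t ht ↦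
    hasDerivAt_prefixPowerSum_line q n _ w fun k hk ↦ (hZ t ht k hk).ne'
  have hpos : ∀ t, 0 < t → 0 < deriv G t := by
    intro t ht
    rw [(hderiv t ht.le).deriv]
    refine (mul_pos hq0 (sum_prefixSum_mul_rpow_mul_sub_pos q (fun a ha b hb hab ↦ ?_)
      (hZ t ht.le) (fun k hk ↦ hW0 k (mem_range.1 hk).le) hm hmn hWm ?_)).trans_le
      (mul_sum_le_of_prefixSum_nonneg hq0.le hq1 (hZ t ht.le)
        (fun k hk ↦ hW0 k (mem_range.1 hk).le) (by simp [hW]))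
    · simp only [w]
      gcongr
      exact hx ha hb hab
    · simp only [w]
      gcongr
  have hmono : StrictMonoOn G (Set.Icc 0 1) :=
    strictMonoOn_of_deriv_pos (convex_Icc 0 1)
      (fun t ht ↦ (hderiv t ht.1).continuousAt.continuousWithinAt)
      (fun t ht ↦ hpos t (by rw [interior_Icc] at ht; exact ht.1))
  simpa [G, w] using hmono ⟨le_rfl, zero_le_one⟩ ⟨zero_le_one, le_rfl⟩ zero_lt_one

lemma exists_succ_lt_of_not_forall_eq {x : ℕ → ℝ} {n : ℕ}
    (hx : ∀ k, 1 ≤ k → k + 1 ≤ n → x (k + 1) ≤ x k) (hne : ¬∀ k, 1 ≤ k → k ≤ n → x k = x 1) :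
    ∃ m, 1 ≤ m ∧ m < n ∧ x (m + 1) < x m := by
  by_contra! h
  refine hne fun k hk hkn ↦ ?_
  induction k, hk using Nat.le_induction with
  | base => rfl
  | succ k hk ih => exact ((hx k hk hkn).antisymm (h k hk hkn)).trans (ih (by omega))

lemma rpow_prefixSum_sub_eq_zero_iff {p : ℝ} (hp : p ≠ 0) {n : ℕ} (hn : 0 < n) {x : ℕ → ℝ}
    (hx : 0 ≤ prefixSum x n) :
    prefixSum x n ^ p - (n : ℝ) ^ p / (∑ i ∈ Icc 1 n, (i : ℝ) ^ (p - 1)) *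
      prefixPowerSum (p - 1) n x = 0 ↔
      prefixPowerSum (p - 1) n x = prefixPowerSum (p - 1) n (fun _ ↦ prefixSum x n / n) := by
  have hn0 : (0 : ℝ) < n := Nat.cast_pos.2 hn
  have hA : 0 < ∑ i ∈ Icc 1 n, (i : ℝ) ^ (p - 1) :=
    sum_pos (fun i hi ↦ Real.rpow_pos_of_pos (Nat.cast_pos.2 (mem_Icc.1 hi).1) _)
      ⟨1, mem_Icc.2 ⟨le_rfl, hn⟩⟩
  have hc : 0 ≤ prefixSum x n / n := div_nonneg hx hn0.le
  rw [prefixPowerSum_const (by simpa using hp) n hc, sub_add_cancel, Real.div_rpow hx hn0.le,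
    sub_eq_zero, div_mul_eq_mul_div, eq_div_iff hA.ne', eq_comm]
  field_simp

lemma prefixSum_div_eq_of_forall_eq {n : ℕ} (hn : 0 < n) {x : ℕ → ℝ} {a : ℝ}
    (h : ∀ k ∈ Icc 1 n, x k = a) : prefixSum x n / n = a := by
  rw [prefixSum_congr h, prefixSum_const, mul_div_cancel_left₀ _ (Nat.cast_pos.2 hn).ne']

theorem equality_case_general (p : ℝ) (hp1 : 1 < p) (hp2 : p ≤ 2) (n : ℕ) (hn : 2 ≤ n)
    (x : ℕ → ℝ) (hx0 : ∀ k, 1 ≤ k → k ≤ n → 0 ≤ x k)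
    (hxmono : ∀ k, 1 ≤ k → k + 1 ≤ n → x (k + 1) ≤ x k) :
    (∑ k ∈ Finset.Icc 1 n, x k) ^ p -
        (n : ℝ) ^ p / (∑ i ∈ Finset.Icc 1 n, (i : ℝ) ^ (p - 1)) *
          ∑ k ∈ Finset.Icc 1 n, x k * (∑ i ∈ Finset.Icc 1 k, x i) ^ (p - 1) = 0 ↔
      ∀ k, 1 ≤ k → k ≤ n → x k = x 1 := by
  change prefixSum x n ^ p - (n : ℝ) ^ p / _ * prefixPowerSum (p - 1) n x = 0 ↔ _
  have hx0' : ∀ k ∈ Icc 1 n, 0 ≤ x k := fun k hk ↦ hx0 k (mem_Icc.1 hk).1 (mem_Icc.1 hk).2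
  rw [rpow_prefixSum_sub_eq_zero_iff (by positivity) (by omega) (sum_nonneg hx0')]
  constructor
  · intro h
    by_contra hne
    obtain ⟨m, hm, hmn, hdrop⟩ := exists_succ_lt_of_not_forall_eq hxmono hne
    have hanti : AntitoneOn x (Set.Icc 1 n) :=
      antitoneOn_of_add_one_le Set.ordConnected_Icc fun k _ hk hk1 ↦ hxmono k hk.1 hk1.2
    exact (prefixPowerSum_avg_lt (q := p - 1) (by linarith) (by linarith) hx0' hanti hm hmn
      hdrop).ne' h
  · intro h
    have hx1 : ∀ k ∈ Icc 1 n, x k = x 1 := fun k hk ↦ h k (mem_Icc.1 hk).1 (mem_Icc.1 hk).2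
    rw [prefixSum_div_eq_of_forall_eq (by omega) hx1]
    exact prefixPowerSum_congr hx1

/-- Equality case of the refined power rule with unit weights: for `1 < p ≤ 2`
and a non-negative non-increasing tuple `x` with `x 1 > 0`, `f_n(x) = 0` iff all
coordinates are equal. -/
theorem equality_case (p : ℝ) (hp1 : 1 < p) (hp2 : p ≤ 2) (n : ℕ) (hn : 2 ≤ n)
    (x : ℕ → ℝ) (hx0 : ∀ k, 1 ≤ k → k ≤ n → 0 ≤ x k)
    (hxmono : ∀ k, 1 ≤ k → k + 1 ≤ n → x (k + 1) ≤ x k) (hx1 : 0 < x 1) :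
    (∑ k ∈ Finset.Icc 1 n, x k) ^ p -
        (n : ℝ) ^ p / (∑ i ∈ Finset.Icc 1 n, (i : ℝ) ^ (p - 1)) *
          ∑ k ∈ Finset.Icc 1 n, x k * (∑ i ∈ Finset.Icc 1 k, x i) ^ (p - 1) = 0 ↔
      ∀ k, 1 ≤ k → k ≤ n → x k = x 1 :=
  equality_case_general p hp1 hp2 n hn x hx0 hxmono
end

section
/- Let $p > 2$ and $n \geq 2$, and set $C_{n,p} = n^p / \sum_{i=1}^n i^{p-1}$. Then the inequality $\left(\sum_{k=1}^n a_k\right)^p \leq C_{n,p} \sum_{k=1}^n a_k \left(\sum_{i=1}^k a_i\right)^{p-1}$ FAILS for some non-negative, non-increasing sequence $(a_k)_{1 \leq k \leq n}$; specifically, there exists $\epsilon \in (0,1)$ such that it fails for $a = (1, 1, \ldots, 1, 1-\epsilon)$. -/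
/-!
Write `N = n`, `S = ∑_{i ≤ n} i^(p-1)` and `C = N^p / S`. For `a = (1, …, 1, 1 - ε)` the deficit
`(∑ a)^p - C ∑ a_k (a_1 + ⋯ + a_k)^(p-1)` equals
`(N - ε)^p - C (S - N^(p-1) + (1 - ε)(N - ε)^(p-1))`, which vanishes at `ε = 0` and has derivative
`N^(p-2) (C (N + p - 1) - p N)` there. This is positive because `p S < N^(p-1) (N + p - 1)`,
which follows by induction on `n` from the strict Bernoulli inequality for the exponent `p - 1 > 1`.
Hence the deficit is positive for small `ε > 0`.
-/

open Real Finset Set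

theorem rpow_mul_add_lt_mul_add_one_rpow {x q : ℝ} (hx : 0 < x) (hq : 1 < q) :
    x ^ q * (x + q) < x * (x + 1) ^ q := by
  have bernoulli : 1 + q * x⁻¹ < (1 + x⁻¹) ^ q :=
    one_add_mul_self_lt_rpow_one_add (by linarith [inv_pos.2 hx]) (inv_ne_zero hx.ne') hq
  have hsplit : (x + 1) ^ q = x ^ q * (1 + x⁻¹) ^ q := by
    rw [← mul_rpow hx.le (by positivity), mul_add, mul_inv_cancel₀ hx.ne', mul_one]
  calc x ^ q * (x + q) = x * (x ^ q * (1 + q * x⁻¹)) := by field_simp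
    _ < x * (x ^ q * (1 + x⁻¹) ^ q) := by gcongr
    _ = x * (x + 1) ^ q := by rw [hsplit]

theorem add_one_mul_sum_Icc_rpow_lt {q : ℝ} (hq : 1 < q) {n : ℕ} (hn : 2 ≤ n) :
    (q + 1) * ∑ i ∈ Icc 1 n, (i : ℝ) ^ q < (n : ℝ) ^ q * (n + q) := by
  induction n, hn using Nat.le_induction with
  | base =>
    have h := rpow_mul_add_lt_mul_add_one_rpow one_pos hq
    norm_num [sum_Icc_succ_top] at h ⊢
    nlinarith
  | succ n hn ih =>
    have h := rpow_mul_add_lt_mul_add_one_rpow (by positivity : (0 : ℝ) < n) hq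
    rw [sum_Icc_succ_top (by omega)]
    push_cast
    linarith

theorem sum_Icc_ite_eq_of_lt {n k : ℕ} (c : ℝ) (hk : k < n) :
    ∑ i ∈ Icc 1 k, (if i = n then c else 1) = (k : ℝ) := by
  rw [sum_congr rfl fun i hi => if_neg (by grind), sum_const, Nat.card_Icc]
  simp

theorem sum_Icc_ite_eq {n : ℕ} (hn : 1 ≤ n) (c : ℝ) :
    ∑ k ∈ Icc 1 n, (if k = n then c else 1) = n - 1 + c := by
  rw [← sum_Ico_add_eq_sum_Icc hn, sum_congr rfl fun k hk => if_neg (mem_Ico.1 hk).2.ne, if_pos rfl,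
    sum_const, Nat.card_Ico, nsmul_one, Nat.cast_sub hn, Nat.cast_one]

theorem sum_Icc_ite_mul_partial_sum {n : ℕ} (hn : 1 ≤ n) (c : ℝ) (g : ℝ → ℝ) :
    ∑ k ∈ Icc 1 n, (if k = n then c else 1) * g (∑ i ∈ Icc 1 k, if i = n then c else 1) =
      ∑ k ∈ Ico 1 n, g k + c * g (n - 1 + c) := by
  rw [← sum_Ico_add_eq_sum_Icc hn, if_pos rfl, sum_Icc_ite_eq hn]
  congr 1
  refine sum_congr rfl fun k hk => ?_
  rw [if_neg (mem_Ico.1 hk).2.ne, one_mul, sum_Icc_ite_eq_of_lt c (mem_Ico.1 hk).2]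

theorem HasDerivAt.exists_lt_of_pos {f : ℝ → ℝ} {f' a b : ℝ} (hf : HasDerivAt f f' a)
    (hf' : 0 < f') (hab : a < b) : ∃ x ∈ Ioo a b, f a < f x := by
  have hslope := (hasDerivAt_iff_tendsto_slope_left_right.1 hf).2
  obtain ⟨x, hpos, hx⟩ :=
    ((hslope.eventually (eventually_gt_nhds hf')).and (Ioo_mem_nhdsGT hab)).exists
  rw [slope_def_field] at hpos
  exact ⟨x, hx, sub_pos.1 ((div_pos_iff_of_pos_right (sub_pos.2 hx.1)).1 hpos)⟩

theorem hasDerivAt_sub_rpow_zero {N : ℝ} (hN : 0 < N) (q : ℝ) :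
    HasDerivAt (fun ε => (N - ε) ^ q) (-(q * N ^ (q - 1))) 0 := by
  have h := (hasDerivAt_rpow_const (x := N - 0) (p := q) (Or.inl (by simpa using hN.ne'))).comp 0
    ((hasDerivAt_id (0 : ℝ)).const_sub N)
  simpa [Function.comp_def] using h

theorem hasDerivAt_last_entry_deficit {N : ℝ} (hN : 0 < N) (p A C : ℝ) :
    HasDerivAt (fun ε => (N - ε) ^ p - C * (A + (1 - ε) * (N - ε) ^ (p - 1)))
      (N ^ (p - 2) * (C * (N + p - 1) - p * N)) 0 := by
  have hprod := ((hasDerivAt_id (0 : ℝ)).const_sub 1).mul (hasDerivAt_sub_rpow_zero hN (p - 1))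
  refine ((hasDerivAt_sub_rpow_zero hN p).sub ((hprod.const_add A).const_mul C)).congr_deriv ?_
  have h1 : N ^ (p - 1) = N ^ (p - 2) * N := by
    rw [← rpow_add_one hN.ne']; ring_nf
  simp only [id, sub_zero, h1, show p - 1 - 1 = p - 2 by ring]
  ring

theorem mul_lt_rpow_div_mul {N S p : ℝ} (hN : 0 < N) (hS : 0 < S)
    (h : p * S < N ^ (p - 1) * (N + p - 1)) : p * N < N ^ p / S * (N + p - 1) := by
  have hNp : N ^ p = N ^ (p - 1) * N := by rw [← rpow_add_one hN.ne', sub_add_cancel]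
  rw [div_mul_eq_mul_div, lt_div_iff₀ hS, hNp]
  nlinarith [mul_lt_mul_of_pos_left h hN]

/-- For `p > 2` the refined power rule fails: there is `ε ∈ (0,1)` such that the
inequality fails for the non-increasing sequence `(1, …, 1, 1-ε)` of length `n`. -/
theorem refined_power_rule_fails (p : ℝ) (hp : 2 < p) (n : ℕ) (hn : 2 ≤ n) :
    ∃ ε : ℝ, ε ∈ Set.Ioo (0 : ℝ) 1 ∧
      (let a : ℕ → ℝ := fun k => if k = n then 1 - ε else 1
       ((n : ℝ) ^ p / ∑ i ∈ Finset.Icc 1 n, (i : ℝ) ^ (p - 1)) *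
           ∑ k ∈ Finset.Icc 1 n, a k * (∑ i ∈ Finset.Icc 1 k, a i) ^ (p - 1) <
         (∑ k ∈ Finset.Icc 1 n, a k) ^ p) := by
  have hN : (0 : ℝ) < n := by positivity
  set A := ∑ k ∈ Ico 1 n, (k : ℝ) ^ (p - 1)
  set S := ∑ i ∈ Icc 1 n, (i : ℝ) ^ (p - 1)
  have hS : S = A + (n : ℝ) ^ (p - 1) := (sum_Ico_add_eq_sum_Icc (by omega)).symm
  have hSpos : 0 < S := by
    rw [hS]; exact add_pos_of_nonneg_of_pos (sum_nonneg fun k _ => by positivity) (by positivity)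
  set C := (n : ℝ) ^ p / S
  have hsum : p * S < (n : ℝ) ^ (p - 1) * (n + p - 1) := by
    have := add_one_mul_sum_Icc_rpow_lt (q := p - 1) (by linarith) hn
    rwa [sub_add_cancel, ← add_sub_assoc] at this
  have hderiv : 0 < (n : ℝ) ^ (p - 2) * (C * (n + p - 1) - p * n) :=
    mul_pos (by positivity) (sub_pos.2 (mul_lt_rpow_div_mul hN hSpos hsum))
  obtain ⟨ε, hε, hlt⟩ := (hasDerivAt_last_entry_deficit hN p A C).exists_lt_of_pos hderiv one_pos
  refine ⟨ε, hε, ?_⟩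
  have hsplit := sum_Icc_ite_mul_partial_sum (by omega : 1 ≤ n) (1 - ε) (· ^ (p - 1))
  intro a
  simp only [a, hsplit, sum_Icc_ite_eq (by omega : 1 ≤ n)]
  have hCS : C * S = (n : ℝ) ^ p := div_mul_cancel₀ _ hSpos.ne'
  rw [show (n : ℝ) - 1 + (1 - ε) = n - ε by ring]
  simp only [sub_zero, one_mul, ← hS, hCS, sub_self] at hlt
  linarith
end
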